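/- arXiv:1510.04808 — 9 statements merged into one kernel-verified Lean document; each statement's English description precedes it below -/
import Mathlib

section
/- Let u₁, u₂ : ℝ × ℝ → ℝ be smooth functions satisfying the A₂ Toda field theory ∂ₓ∂ᵧ u₁ = −exp(2u₁ − u₂) and ∂ₓ∂ᵧ u₂ = −exp(−u₁ + 2u₂) everywhere. Then the function I₁ = −∂ₓ²u₁ − ∂ₓ²u₂ + (∂ₓu₁)² − (∂ₓu₁)(∂ₓu₂) + (∂ₓu₂)² satisfies ∂ᵧ I₁ = 0 everywhere. -/
/-- Partial derivative in the first (x) variable. -/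
noncomputable def pdX (u : ℝ × ℝ → ℝ) (p : ℝ × ℝ) : ℝ :=
  deriv (fun s => u (s, p.2)) p.1

/-- Partial derivative in the second (y) variable. -/
noncomputable def pdY (u : ℝ × ℝ → ℝ) (p : ℝ × ℝ) : ℝ :=
  deriv (fun t => u (p.1, t)) p.2


noncomputable def pd (v : ℝ × ℝ) (u : ℝ × ℝ → ℝ) (p : ℝ × ℝ) : ℝ := fderiv ℝ u p v

lemma hasDerivAt_sliceX (u : ℝ × ℝ → ℝ) (hu : Differentiable ℝ u) (p : ℝ × ℝ) :
    HasDerivAt (fun s => u (s, p.2)) (pd ((1:ℝ), (0:ℝ)) u p) p.1 := by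
  have hcurve : HasDerivAt (fun s : ℝ => (s, p.2)) ((1:ℝ), (0:ℝ)) p.1 :=
    (hasDerivAt_id p.1).prodMk (hasDerivAt_const p.1 p.2)
  simpa [pd, Function.comp_def] using ((hu (p.1, p.2)).hasFDerivAt).comp_hasDerivAt p.1 hcurve

lemma hasDerivAt_sliceY (u : ℝ × ℝ → ℝ) (hu : Differentiable ℝ u) (p : ℝ × ℝ) :
    HasDerivAt (fun t => u (p.1, t)) (pd ((0:ℝ), (1:ℝ)) u p) p.2 := by
  have hcurve : HasDerivAt (fun t : ℝ => (p.1, t)) ((0:ℝ), (1:ℝ)) p.2 :=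
    (hasDerivAt_const p.2 p.1).prodMk (hasDerivAt_id p.2)
  simpa [pd, Function.comp_def] using ((hu (p.1, p.2)).hasFDerivAt).comp_hasDerivAt p.2 hcurve

lemma pdX_eq (u : ℝ × ℝ → ℝ) (hu : Differentiable ℝ u) :
    pdX u = pd ((1:ℝ), (0:ℝ)) u :=
  funext fun p => (hasDerivAt_sliceX u hu p).deriv

lemma pdY_eq (u : ℝ × ℝ → ℝ) (hu : Differentiable ℝ u) :
    pdY u = pd ((0:ℝ), (1:ℝ)) u :=
  funext fun p => (hasDerivAt_sliceY u hu p).deriv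

lemma contDiff_pd (u : ℝ × ℝ → ℝ) (hu : ContDiff ℝ (⊤ : ℕ∞) u) (v : ℝ × ℝ) :
    ContDiff ℝ (⊤ : ℕ∞) (pd v u) :=
  (hu.fderiv_right (by simp)).clm_apply contDiff_const

lemma pd_swap (u : ℝ × ℝ → ℝ) (hu : ContDiff ℝ (⊤ : ℕ∞) u) (v w : ℝ × ℝ) (p : ℝ × ℝ) :
    pd v (pd w u) p = pd w (pd v u) p := by
  have hd : Differentiable ℝ (fderiv ℝ u) := (hu.fderiv_right (m := 1) (by exact WithTop.coe_le_coe.mpr le_top)).differentiable one_ne_zero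
  have key : ∀ a b : ℝ × ℝ,
      pd a (pd b u) p = (fderiv ℝ (fderiv ℝ u) p) a b := by
    intro a b
    have : (fun q => fderiv ℝ u q b) = fun q => (fderiv ℝ u q) ((fun _ => b) q) := rfl
    show fderiv ℝ (fun q => fderiv ℝ u q b) p a = _
    rw [fderiv_clm_apply (hd p) (differentiableAt_const b)]
    simp
  rw [key, key]
  exact second_derivative_symmetric (fun y => ((hu.differentiable (by simp)) y).hasFDerivAt)
    ((hd p).hasFDerivAt) v w



/-- For smooth solutions `u₁, u₂` of the A₂ Toda field theory
`u₁_{xy} = -exp(2u₁ - u₂)`, `u₂_{xy} = -exp(-u₁ + 2u₂)`, the function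
`I₁ = -u₁_{xx} - u₂_{xx} + u₁_x² - u₁_x u₂_x + u₂_x²` satisfies `∂_y I₁ = 0`. -/
theorem A2_toda_characteristic_integral_I1
    (u₁ u₂ : ℝ × ℝ → ℝ) (hu₁ : ContDiff ℝ (⊤ : ℕ∞) u₁) (hu₂ : ContDiff ℝ (⊤ : ℕ∞) u₂)
    (heq₁ : ∀ p : ℝ × ℝ, pdX (pdY u₁) p = -Real.exp (2 * u₁ p - u₂ p))
    (heq₂ : ∀ p : ℝ × ℝ, pdX (pdY u₂) p = -Real.exp (-u₁ p + 2 * u₂ p)) :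
    ∀ p : ℝ × ℝ,
      pdY (fun q => -pdX (pdX u₁) q - pdX (pdX u₂) q + (pdX u₁ q) ^ 2
        - pdX u₁ q * pdX u₂ q + (pdX u₂ q) ^ 2) p = 0 := by

  intro p
  set e₁ : ℝ × ℝ := ((1:ℝ), (0:ℝ)) with he₁
  set e₂ : ℝ × ℝ := ((0:ℝ), (1:ℝ)) with he₂
  have d₁ : Differentiable ℝ u₁ := hu₁.differentiable (by simp)
  have d₂ : Differentiable ℝ u₂ := hu₂.differentiable (by simp)
  -- smoothness of first partials
  have s₁ : ContDiff ℝ (⊤ : ℕ∞) (pd e₁ u₁) := contDiff_pd u₁ hu₁ e₁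
  have s₂ : ContDiff ℝ (⊤ : ℕ∞) (pd e₁ u₂) := contDiff_pd u₂ hu₂ e₁
  have t₁ : ContDiff ℝ (⊤ : ℕ∞) (pd e₂ u₁) := contDiff_pd u₁ hu₁ e₂
  have t₂ : ContDiff ℝ (⊤ : ℕ∞) (pd e₂ u₂) := contDiff_pd u₂ hu₂ e₂
  have s₁₁ : ContDiff ℝ (⊤ : ℕ∞) (pd e₁ (pd e₁ u₁)) := contDiff_pd _ s₁ e₁
  have s₁₂ : ContDiff ℝ (⊤ : ℕ∞) (pd e₁ (pd e₁ u₂)) := contDiff_pd _ s₂ e₁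
  -- identify pdX/pdY with pd
  have hXu₁ : pdX u₁ = pd e₁ u₁ := pdX_eq u₁ d₁
  have hXu₂ : pdX u₂ = pd e₁ u₂ := pdX_eq u₂ d₂
  have hXXu₁ : pdX (pd e₁ u₁) = pd e₁ (pd e₁ u₁) := pdX_eq _ (s₁.differentiable (by simp))
  have hXXu₂ : pdX (pd e₁ u₂) = pd e₁ (pd e₁ u₂) := pdX_eq _ (s₂.differentiable (by simp))
  -- the mixed second derivatives from the PDE
  have hmix₁ : pd e₂ (pd e₁ u₁) = fun q => -Real.exp (2 * u₁ q - u₂ q) := by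
    funext q
    rw [pd_swap u₁ hu₁ e₂ e₁ q, ← heq₁ q, pdY_eq u₁ d₁, pdX_eq _ (t₁.differentiable (by simp))]
  have hmix₂ : pd e₂ (pd e₁ u₂) = fun q => -Real.exp (-u₁ q + 2 * u₂ q) := by
    funext q
    rw [pd_swap u₂ hu₂ e₂ e₁ q, ← heq₂ q, pdY_eq u₂ d₂, pdX_eq _ (t₂.differentiable (by simp))]
  -- third derivatives
  have hE₁ : HasFDerivAt (fun q => -Real.exp (2 * u₁ q - u₂ q))
      (-(Real.exp (2 * u₁ p - u₂ p) • ((2:ℝ) • fderiv ℝ u₁ p - fderiv ℝ u₂ p))) p := by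
    have h1 : HasFDerivAt (fun q => 2 * u₁ q - u₂ q)
        ((2:ℝ) • fderiv ℝ u₁ p - fderiv ℝ u₂ p) p := by
      have := (((d₁ p).hasFDerivAt.const_smul (2:ℝ)).sub (d₂ p).hasFDerivAt)
      exact this
    exact h1.exp.neg
  have hE₂ : HasFDerivAt (fun q => -Real.exp (-u₁ q + 2 * u₂ q))
      (-(Real.exp (-u₁ p + 2 * u₂ p) • (-(fderiv ℝ u₁ p) + (2:ℝ) • fderiv ℝ u₂ p))) p := by
    have h1 : HasFDerivAt (fun q => -u₁ q + 2 * u₂ q)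
        (-(fderiv ℝ u₁ p) + (2:ℝ) • fderiv ℝ u₂ p) p := by
      have := ((d₁ p).hasFDerivAt.neg.add ((d₂ p).hasFDerivAt.const_smul (2:ℝ)))
      exact this
    exact h1.exp.neg
  have h3rd₁ : pd e₂ (pd e₁ (pd e₁ u₁)) p
      = -(Real.exp (2 * u₁ p - u₂ p) * (2 * pd e₁ u₁ p - pd e₁ u₂ p)) := by
    rw [pd_swap _ s₁ e₂ e₁ p]
    show fderiv ℝ (pd e₂ (pd e₁ u₁)) p e₁ = _
    rw [hmix₁, hE₁.fderiv]
    simp only [pd, ContinuousLinearMap.neg_apply, ContinuousLinearMap.smul_apply,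
      ContinuousLinearMap.sub_apply, ContinuousLinearMap.add_apply, smul_eq_mul]
  have h3rd₂ : pd e₂ (pd e₁ (pd e₁ u₂)) p
      = -(Real.exp (-u₁ p + 2 * u₂ p) * (-pd e₁ u₁ p + 2 * pd e₁ u₂ p)) := by
    rw [pd_swap _ s₂ e₂ e₁ p]
    show fderiv ℝ (pd e₂ (pd e₁ u₂)) p e₁ = _
    rw [hmix₂, hE₂.fderiv]
    simp only [pd, ContinuousLinearMap.neg_apply, ContinuousLinearMap.smul_apply,
      ContinuousLinearMap.sub_apply, ContinuousLinearMap.add_apply, smul_eq_mul]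
  -- rewrite target
  simp only [hXu₁, hXu₂, hXXu₁, hXXu₂]
  -- compute the y-derivative of the combination
  have h₁ := hasDerivAt_sliceY _ (s₁₁.differentiable (by simp)) p
  have h₂ := hasDerivAt_sliceY _ (s₁₂.differentiable (by simp)) p
  have h₃ := hasDerivAt_sliceY _ (s₁.differentiable (by simp)) p
  have h₄ := hasDerivAt_sliceY _ (s₂.differentiable (by simp)) p
  have H := ((((h₁.neg.sub h₂).add (h₃.pow 2)).sub (h₃.mul h₄)).add (h₄.pow 2))
  have hval : pdY (fun q => -pd e₁ (pd e₁ u₁) q - pd e₁ (pd e₁ u₂) q + pd e₁ u₁ q ^ 2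
      - pd e₁ u₁ q * pd e₁ u₂ q + pd e₁ u₂ q ^ 2) p
      = -pd e₂ (pd e₁ (pd e₁ u₁)) p - pd e₂ (pd e₁ (pd e₁ u₂)) p
        + 2 * pd e₁ u₁ p ^ 1 * pd e₂ (pd e₁ u₁) p
        - (pd e₂ (pd e₁ u₁) p * pd e₁ u₂ p + pd e₁ u₁ p * pd e₂ (pd e₁ u₂) p)
        + 2 * pd e₁ u₂ p ^ 1 * pd e₂ (pd e₁ u₂) p := H.deriv
  rw [hval, h3rd₁, h3rd₂, hmix₁, hmix₂]
  ring
end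

section
/- Let u₁, u₂ : ℝ × ℝ → ℝ be smooth functions satisfying the A₂ Toda field theory ∂ₓ∂ᵧ u₁ = −exp(2u₁ − u₂) and ∂ₓ∂ᵧ u₂ = −exp(−u₁ + 2u₂) everywhere. Then the function I₂ = −∂ₓ³u₂ + 2(∂ₓ²u₂)(∂ₓu₂) − (∂ₓ²u₁)(∂ₓu₂) + (∂ₓu₁)²(∂ₓu₂) − (∂ₓu₁)(∂ₓu₂)² satisfies ∂ᵧ I₂ = 0 everywhere. -/
lemma sliceX_diff {u : ℝ × ℝ → ℝ} (hu : ContDiff ℝ (⊤ : ℕ∞) u) (p : ℝ × ℝ) :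
    DifferentiableAt ℝ (fun s => u (s, p.2)) p.1 :=
  (hu.differentiable (by simp)).differentiableAt.comp p.1
    (differentiableAt_id.prodMk (differentiableAt_const _))

lemma sliceY_diff {u : ℝ × ℝ → ℝ} (hu : ContDiff ℝ (⊤ : ℕ∞) u) (p : ℝ × ℝ) :
    DifferentiableAt ℝ (fun t => u (p.1, t)) p.2 :=
  (hu.differentiable (by simp)).differentiableAt.comp p.2
    ((differentiableAt_const _).prodMk differentiableAt_id)

lemma pdX_eq_s3 {u : ℝ × ℝ → ℝ} {p : ℝ × ℝ} (hu : DifferentiableAt ℝ u p) :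
    pdX u p = fderiv ℝ u p (1, 0) := by
  have h : HasDerivAt (fun s : ℝ => (s, p.2)) ((1:ℝ), (0:ℝ)) p.1 :=
    (hasDerivAt_id p.1).prodMk (hasDerivAt_const p.1 p.2)
  exact (hu.hasFDerivAt.comp_hasDerivAt p.1 h).deriv

lemma pdY_eq_s3 {u : ℝ × ℝ → ℝ} {p : ℝ × ℝ} (hu : DifferentiableAt ℝ u p) :
    pdY u p = fderiv ℝ u p (0, 1) := by
  have h : HasDerivAt (fun t : ℝ => (p.1, t)) ((0:ℝ), (1:ℝ)) p.2 :=
    (hasDerivAt_const p.2 p.1).prodMk (hasDerivAt_id p.2)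
  exact (hu.hasFDerivAt.comp_hasDerivAt p.2 h).deriv

lemma contDiff_pdX {u : ℝ × ℝ → ℝ} (hu : ContDiff ℝ (⊤ : ℕ∞) u) : ContDiff ℝ (⊤ : ℕ∞) (pdX u) := by
  have h : pdX u = fun p => fderiv ℝ u p (1, 0) :=
    funext fun p => pdX_eq_s3 ((hu.differentiable (by simp)) p)
  rw [h]
  exact (hu.fderiv_right (by simp)).clm_apply contDiff_const

lemma contDiff_pdY {u : ℝ × ℝ → ℝ} (hu : ContDiff ℝ (⊤ : ℕ∞) u) : ContDiff ℝ (⊤ : ℕ∞) (pdY u) := by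
  have h : pdY u = fun p => fderiv ℝ u p (0, 1) :=
    funext fun p => pdY_eq_s3 ((hu.differentiable (by simp)) p)
  rw [h]
  exact (hu.fderiv_right (by simp)).clm_apply contDiff_const

lemma pdY_pdX_comm {u : ℝ × ℝ → ℝ} (hu : ContDiff ℝ (⊤ : ℕ∞) u) (p : ℝ × ℝ) :
    pdY (pdX u) p = pdX (pdY u) p := by
  have hdu : Differentiable ℝ u := hu.differentiable (by simp)
  have hfd : ContDiff ℝ (⊤ : ℕ∞) (fun q => fderiv ℝ u q) := hu.fderiv_right (by simp)
  have hfd' : DifferentiableAt ℝ (fderiv ℝ u) p := (hfd.differentiable (by simp)) p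
  have hx : pdX u = fun q => fderiv ℝ u q (1, 0) := funext fun q => pdX_eq_s3 (hdu q)
  have hy : pdY u = fun q => fderiv ℝ u q (0, 1) := funext fun q => pdY_eq_s3 (hdu q)
  have key : ∀ v w : ℝ × ℝ, fderiv ℝ (fun q => fderiv ℝ u q v) p w
      = fderiv ℝ (fderiv ℝ u) p w v := by
    intro v w
    have h : HasFDerivAt (fun q => fderiv ℝ u q v)
        ((ContinuousLinearMap.apply ℝ ℝ v).comp (fderiv ℝ (fderiv ℝ u) p)) p :=
      (ContinuousLinearMap.apply ℝ ℝ v).hasFDerivAt.comp p hfd'.hasFDerivAt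
    rw [h.fderiv]; rfl
  have sym := second_derivative_symmetric (f' := fderiv ℝ u)
      (fun y => (hdu y).hasFDerivAt) hfd'.hasFDerivAt ((1:ℝ), (0:ℝ)) ((0:ℝ), (1:ℝ))
  have d1 : DifferentiableAt ℝ (pdX u) p := ((contDiff_pdX hu).differentiable (by simp)) p
  have d2 : DifferentiableAt ℝ (pdY u) p := ((contDiff_pdY hu).differentiable (by simp)) p
  rw [pdY_eq_s3 d1, pdX_eq_s3 d2, hx, hy, key, key, sym]

section rules
variable {f g c : ℝ × ℝ → ℝ} {p : ℝ × ℝ}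

lemma pdX_add (hf : ContDiff ℝ (⊤ : ℕ∞) f) (hg : ContDiff ℝ (⊤ : ℕ∞) g) (p : ℝ × ℝ) :
    pdX (fun q => f q + g q) p = pdX f p + pdX g p := by
  simp only [pdX]; exact deriv_add (sliceX_diff hf p) (sliceX_diff hg p)

lemma pdY_add (hf : ContDiff ℝ (⊤ : ℕ∞) f) (hg : ContDiff ℝ (⊤ : ℕ∞) g) (p : ℝ × ℝ) :
    pdY (fun q => f q + g q) p = pdY f p + pdY g p := by
  simp only [pdY]; exact deriv_add (sliceY_diff hf p) (sliceY_diff hg p)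

lemma pdX_sub (hf : ContDiff ℝ (⊤ : ℕ∞) f) (hg : ContDiff ℝ (⊤ : ℕ∞) g) (p : ℝ × ℝ) :
    pdX (fun q => f q - g q) p = pdX f p - pdX g p := by
  simp only [pdX]; exact deriv_sub (sliceX_diff hf p) (sliceX_diff hg p)

lemma pdY_sub (hf : ContDiff ℝ (⊤ : ℕ∞) f) (hg : ContDiff ℝ (⊤ : ℕ∞) g) (p : ℝ × ℝ) :
    pdY (fun q => f q - g q) p = pdY f p - pdY g p := by
  simp only [pdY]; exact deriv_sub (sliceY_diff hf p) (sliceY_diff hg p)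

lemma pdX_neg (p : ℝ × ℝ) : pdX (fun q => -f q) p = -pdX f p := by
  simp only [pdX]; exact deriv.neg

lemma pdY_neg (p : ℝ × ℝ) : pdY (fun q => -f q) p = -pdY f p := by
  simp only [pdY]; exact deriv.neg

lemma pdX_const_mul (c : ℝ) (hf : ContDiff ℝ (⊤ : ℕ∞) f) (p : ℝ × ℝ) :
    pdX (fun q => c * f q) p = c * pdX f p := by
  simp only [pdX]; exact deriv_const_mul c (sliceX_diff hf p)

lemma pdY_const_mul (c : ℝ) (hf : ContDiff ℝ (⊤ : ℕ∞) f) (p : ℝ × ℝ) :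
    pdY (fun q => c * f q) p = c * pdY f p := by
  simp only [pdY]; exact deriv_const_mul c (sliceY_diff hf p)

lemma pdX_mul (hf : ContDiff ℝ (⊤ : ℕ∞) f) (hg : ContDiff ℝ (⊤ : ℕ∞) g) (p : ℝ × ℝ) :
    pdX (fun q => f q * g q) p = pdX f p * g p + f p * pdX g p := by
  simp only [pdX]
  have h := deriv_fun_mul (sliceX_diff hf p) (sliceX_diff hg p)
  simpa using h

lemma pdY_mul (hf : ContDiff ℝ (⊤ : ℕ∞) f) (hg : ContDiff ℝ (⊤ : ℕ∞) g) (p : ℝ × ℝ) :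
    pdY (fun q => f q * g q) p = pdY f p * g p + f p * pdY g p := by
  simp only [pdY]
  have h := deriv_fun_mul (sliceY_diff hf p) (sliceY_diff hg p)
  simpa using h

lemma pdX_sq (hf : ContDiff ℝ (⊤ : ℕ∞) f) (p : ℝ × ℝ) :
    pdX (fun q => f q ^ 2) p = 2 * f p * pdX f p := by
  simp only [pdX]
  have h := ((sliceX_diff hf p).hasDerivAt.fun_pow 2).deriv
  simpa using h

lemma pdY_sq (hf : ContDiff ℝ (⊤ : ℕ∞) f) (p : ℝ × ℝ) :
    pdY (fun q => f q ^ 2) p = 2 * f p * pdY f p := by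
  simp only [pdY]
  have h := ((sliceY_diff hf p).hasDerivAt.fun_pow 2).deriv
  simpa using h

lemma pdX_exp (hc : ContDiff ℝ (⊤ : ℕ∞) c) (p : ℝ × ℝ) :
    pdX (fun q => Real.exp (c q)) p = Real.exp (c p) * pdX c p := by
  simp only [pdX]
  have h := ((sliceX_diff hc p).hasDerivAt.exp).deriv
  simpa using h

end rules

/-- For smooth solutions `u₁, u₂` of the A₂ Toda field theory
`u₁_{xy} = -exp(2u₁ - u₂)`, `u₂_{xy} = -exp(-u₁ + 2u₂)`, the function
`I₂ = -u₂_{xxx} + 2 u₂_{xx} u₂_x - u₁_{xx} u₂_x + u₁_x² u₂_x - u₁_x u₂_x²`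
satisfies `∂_y I₂ = 0`. -/
theorem A2_toda_characteristic_integral_I2
    (u₁ u₂ : ℝ × ℝ → ℝ) (hu₁ : ContDiff ℝ (⊤ : ℕ∞) u₁) (hu₂ : ContDiff ℝ (⊤ : ℕ∞) u₂)
    (heq₁ : ∀ p : ℝ × ℝ, pdX (pdY u₁) p = -Real.exp (2 * u₁ p - u₂ p))
    (heq₂ : ∀ p : ℝ × ℝ, pdX (pdY u₂) p = -Real.exp (-u₁ p + 2 * u₂ p)) :
    ∀ p : ℝ × ℝ,
      pdY (fun q => -pdX (pdX (pdX u₂)) q + 2 * pdX (pdX u₂) q * pdX u₂ q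
        - pdX (pdX u₁) q * pdX u₂ q + (pdX u₁ q) ^ 2 * pdX u₂ q
        - pdX u₁ q * (pdX u₂ q) ^ 2) p = 0 := by
  have ha : ContDiff ℝ (⊤ : ℕ∞) (pdX u₁) := contDiff_pdX hu₁
  have hb : ContDiff ℝ (⊤ : ℕ∞) (pdX u₂) := contDiff_pdX hu₂
  have hax : ContDiff ℝ (⊤ : ℕ∞) (pdX (pdX u₁)) := contDiff_pdX ha
  have hbx : ContDiff ℝ (⊤ : ℕ∞) (pdX (pdX u₂)) := contDiff_pdX hb
  have hbxx : ContDiff ℝ (⊤ : ℕ∞) (pdX (pdX (pdX u₂))) := contDiff_pdX hbx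
  -- smoothness of exponential terms
  have hc₁ : ContDiff ℝ (⊤ : ℕ∞) (fun q => 2 * u₁ q - u₂ q) := (contDiff_const.mul hu₁).sub hu₂
  have hc₂ : ContDiff ℝ (⊤ : ℕ∞) (fun q => -u₁ q + 2 * u₂ q) := (hu₁.neg).add (contDiff_const.mul hu₂)
  have hE₁ : ContDiff ℝ (⊤ : ℕ∞) (fun q => Real.exp (2 * u₁ q - u₂ q)) := Real.contDiff_exp.comp hc₁
  have hE₂ : ContDiff ℝ (⊤ : ℕ∞) (fun q => Real.exp (-u₁ q + 2 * u₂ q)) := Real.contDiff_exp.comp hc₂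
  -- pdX of arguments of exponentials
  have hXc₁ : ∀ q, pdX (fun q => 2 * u₁ q - u₂ q) q = 2 * pdX u₁ q - pdX u₂ q := by
    intro q
    rw [pdX_sub (contDiff_const.mul hu₁) hu₂ q, pdX_const_mul 2 hu₁ q]
  have hXc₂ : ∀ q, pdX (fun q => -u₁ q + 2 * u₂ q) q = -pdX u₁ q + 2 * pdX u₂ q := by
    intro q
    rw [pdX_add (hu₁.neg) (contDiff_const.mul hu₂) q, pdX_neg q, pdX_const_mul 2 hu₂ q]
  have hXE₁ : ∀ q, pdX (fun q => Real.exp (2 * u₁ q - u₂ q)) q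
      = Real.exp (2 * u₁ q - u₂ q) * (2 * pdX u₁ q - pdX u₂ q) := by
    intro q; rw [pdX_exp hc₁ q, hXc₁ q]
  have hXE₂ : ∀ q, pdX (fun q => Real.exp (-u₁ q + 2 * u₂ q)) q
      = Real.exp (-u₁ q + 2 * u₂ q) * (-pdX u₁ q + 2 * pdX u₂ q) := by
    intro q; rw [pdX_exp hc₂ q, hXc₂ q]
  -- first y-derivatives
  have hYa : ∀ q, pdY (pdX u₁) q = -Real.exp (2 * u₁ q - u₂ q) := by
    intro q; rw [pdY_pdX_comm hu₁ q, heq₁ q]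
  have hYb : ∀ q, pdY (pdX u₂) q = -Real.exp (-u₁ q + 2 * u₂ q) := by
    intro q; rw [pdY_pdX_comm hu₂ q, heq₂ q]
  have hYaf : pdY (pdX u₁) = fun q => -Real.exp (2 * u₁ q - u₂ q) := funext hYa
  have hYbf : pdY (pdX u₂) = fun q => -Real.exp (-u₁ q + 2 * u₂ q) := funext hYb
  -- second mixed derivatives
  have hYax : ∀ q, pdY (pdX (pdX u₁)) q
      = -(Real.exp (2 * u₁ q - u₂ q) * (2 * pdX u₁ q - pdX u₂ q)) := by
    intro q
    rw [pdY_pdX_comm ha q, hYaf, pdX_neg q, hXE₁ q]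
  have hYbx : ∀ q, pdY (pdX (pdX u₂)) q
      = -(Real.exp (-u₁ q + 2 * u₂ q) * (-pdX u₁ q + 2 * pdX u₂ q)) := by
    intro q
    rw [pdY_pdX_comm hb q, hYbf, pdX_neg q, hXE₂ q]
  have hYbxf : pdY (pdX (pdX u₂))
      = fun q => -(Real.exp (-u₁ q + 2 * u₂ q) * (-pdX u₁ q + 2 * pdX u₂ q)) := funext hYbx
  -- third mixed derivative
  have hg₂ : ContDiff ℝ (⊤ : ℕ∞) (fun q => -pdX u₁ q + 2 * pdX u₂ q) :=
    (ha.neg).add (contDiff_const.mul hb)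
  have hXg₂ : ∀ q, pdX (fun q => -pdX u₁ q + 2 * pdX u₂ q) q
      = -pdX (pdX u₁) q + 2 * pdX (pdX u₂) q := by
    intro q
    rw [pdX_add (ha.neg) (contDiff_const.mul hb) q, pdX_neg q, pdX_const_mul 2 hb q]
  have hYbxx : ∀ q, pdY (pdX (pdX (pdX u₂))) q
      = -((Real.exp (-u₁ q + 2 * u₂ q) * (-pdX u₁ q + 2 * pdX u₂ q))
            * (-pdX u₁ q + 2 * pdX u₂ q)
          + Real.exp (-u₁ q + 2 * u₂ q) * (-pdX (pdX u₁) q + 2 * pdX (pdX u₂) q)) := by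
    intro q
    rw [pdY_pdX_comm hbx q, hYbxf, pdX_neg q, pdX_mul hE₂ hg₂ q, hXE₂ q, hXg₂ q]
  -- expand the y-derivative of I₂
  intro p
  rw [pdY_sub ((((hbxx.neg).add ((contDiff_const.mul hbx).mul hb)).sub (hax.mul hb)).add
        ((ha.pow 2).mul hb)) (ha.mul (hb.pow 2)) p,
    pdY_add (((hbxx.neg).add ((contDiff_const.mul hbx).mul hb)).sub (hax.mul hb))
      ((ha.pow 2).mul hb) p,
    pdY_sub ((hbxx.neg).add ((contDiff_const.mul hbx).mul hb)) (hax.mul hb) p,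
    pdY_add (hbxx.neg) ((contDiff_const.mul hbx).mul hb) p,
    pdY_neg p,
    pdY_mul (contDiff_const.mul hbx) hb p,
    pdY_const_mul 2 hbx p,
    pdY_mul hax hb p,
    pdY_mul (ha.pow 2) hb p,
    pdY_sq ha p,
    pdY_mul ha (hb.pow 2) p,
    pdY_sq hb p,
    hYbxx p, hYbx p, hYax p, hYa p, hYb p]
  ring
end

section
/- Let R = ℂ[v₁, v₂, v₃] be the polynomial ring in three variables over ℂ, let D be the unique ℂ-derivation of R with D v₁ = v₁² − v₃, D v₂ = v₂² + v₃ − v₁v₂, D v₃ = v₁v₃, and let E₂ be the unique ℂ-derivation of R with E₂ v₁ = 0, E₂ v₂ = 1, E₂ v₃ = 0. Then the commutator of derivations satisfies [D, E₂] = −(2v₂ − v₁) · E₂, i.e., D ∘ E₂ − E₂ ∘ D equals the derivation E₂ multiplied by the polynomial −(2v₂ − v₁). -/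
open MvPolynomial

theorem MvPolynomial.derivation_commutator_eq_smul_of_X {σ R : Type*} [CommRing R]
    {D E : Derivation R (MvPolynomial σ R) (MvPolynomial σ R)} {f : MvPolynomial σ R}
    (h : ∀ i, D (E (X i)) - E (D (X i)) = f * E (X i)) (p : MvPolynomial σ R) :
    D (E p) - E (D p) = f * E p := by
  have hcomm : ⁅D, E⁆ = f • E := derivation_ext fun i => by
    simpa only [Derivation.commutator_apply, Derivation.smul_apply, smul_eq_mul] using h i
  simpa only [Derivation.commutator_apply, Derivation.smul_apply, smul_eq_mul] using
    congrArg (· p) hcomm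

/-- Let `R = ℂ[v₁, v₂, v₃]` (with `v₁ = X 0`, `v₂ = X 1`, `v₃ = X 2`), let `D` be
the ℂ-derivation with `D v₁ = v₁² - v₃`, `D v₂ = v₂² + v₃ - v₁v₂`, `D v₃ = v₁v₃`,
and let `E₂` be the ℂ-derivation with `E₂ v₁ = 0`, `E₂ v₂ = 1`, `E₂ v₃ = 0`.
Then `[D, E₂] = -(2v₂ - v₁) · E₂` as derivations: for every `p`,
`D (E₂ p) - E₂ (D p) = -(2v₂ - v₁) * E₂ p`. -/
theorem A2_Kostant_commutator_relation_alpha2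
    (D E₂ : Derivation ℂ (MvPolynomial (Fin 3) ℂ) (MvPolynomial (Fin 3) ℂ))
    (hD1 : D (X 0) = (X 0) ^ 2 - X 2)
    (hD2 : D (X 1) = (X 1) ^ 2 + X 2 - X 0 * X 1)
    (hD3 : D (X 2) = X 0 * X 2)
    (hE1 : E₂ (X 0) = 0) (hE2 : E₂ (X 1) = 1) (hE3 : E₂ (X 2) = 0) :
    ∀ p : MvPolynomial (Fin 3) ℂ,
      D (E₂ p) - E₂ (D p) = -(2 * X 1 - X 0) * E₂ p := by
  refine MvPolynomial.derivation_commutator_eq_smul_of_X fun i => ?_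
  fin_cases i <;> simp [hD1, hD2, hD3, hE1, hE2, hE3]
end

section
/- Let n ∈ ℕ, let a ∈ Matrix (Fin n) (Fin n) ℝ, and let K be an invertible lower unitriangular n×n real matrix (K i i = 1 and K i j = 0 for i < j). Suppose g, L₋, L₊ : ℝ → Matrix (Fin n) (Fin n) ℝ are functions differentiable at 0 such that for all t: g(t)·K = L₋(t)·L₊(t), L₋(t) is lower unitriangular, and L₊(t) is upper triangular; and suppose g(0) = 1 (the identity matrix), g′(0) = −a, and L₋(0) = K. Then L₋′(0) = −K · P₋(K⁻¹ a K), where P₋(M) denotes the strictly lower triangular part of M (P₋(M) i j = M i j if j < i and 0 otherwise). -/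
open Matrix

/-!
Differentiate `g(t) K = L₋(t) L₊(t)` at `t = 0`. Since `L₊(0) = K⁻¹ g(0) K = 1`, this gives
`-a K = L₋'(0) + K L₊'(0)`, i.e. `K⁻¹ L₋'(0) + L₊'(0) = -K⁻¹ a K`. Here `K⁻¹ L₋'(0)` is strictly
lower triangular (`K⁻¹` is lower triangular and `L₋'(0)` strictly so, the diagonal of `L₋` being
constant) while `L₊'(0)` is upper triangular, so `K⁻¹ L₋'(0)` is the strictly lower part of
`-K⁻¹ a K`.
-/

namespace Matrix

section StrictLowerPart

variable {m R : Type*} [LinearOrder m]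

def strictLowerPart [Zero R] (M : Matrix m m R) : Matrix m m R :=
  of fun i j => if j < i then M i j else 0

theorem strictLowerPart_neg [NegZeroClass R] (M : Matrix m m R) :
    strictLowerPart (-M) = -strictLowerPart M := by
  ext i j
  simp only [strictLowerPart, of_apply, neg_apply]
  split_ifs <;> simp only [neg_zero]

theorem strictLowerPart_eq_of_add_eq [AddZeroClass R] {S U M : Matrix m m R}
    (hS : ∀ i j, i ≤ j → S i j = 0) (hU : U.IsUpperTriangular) (h : S + U = M) :
    strictLowerPart M = S := by
  ext i j
  simp only [strictLowerPart, of_apply, ← h, add_apply]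
  split_ifs with hji
  · rw [hU hji, add_zero]
  · exact (hS i j (not_lt.mp hji)).symm

theorem mul_apply_eq_zero_of_isLowerTriangular [Fintype m] [NonUnitalNonAssocSemiring R]
    {A B : Matrix m m R} (hA : A.IsLowerTriangular) (hB : ∀ i j, i ≤ j → B i j = 0)
    {i j : m} (hij : i ≤ j) : (A * B) i j = 0 := by
  rw [mul_apply]
  refine Finset.sum_eq_zero fun k _ => ?_
  rcases lt_or_ge i k with hik | hki
  · rw [hA hik, zero_mul]
  · rw [hB k j (hki.trans hij), mul_zero]

end StrictLowerPart

variable {𝕜 : Type*} [NontriviallyNormedField 𝕜]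

theorem hasDerivAt_mul_apply {l m n : Type*} [Fintype m] {A : 𝕜 → Matrix l m 𝕜}
    {B : 𝕜 → Matrix m n 𝕜} {A' : Matrix l m 𝕜} {B' : Matrix m n 𝕜} {x : 𝕜}
    (hA : ∀ i j, HasDerivAt (fun t => A t i j) (A' i j) x)
    (hB : ∀ i j, HasDerivAt (fun t => B t i j) (B' i j) x) (i : l) (j : n) :
    HasDerivAt (fun t => (A t * B t) i j) ((A' * B x + A x * B') i j) x := by
  simp only [mul_apply, add_apply, ← Finset.sum_add_distrib]
  exact HasDerivAt.fun_sum fun k _ => (hA i k).mul (hB k j)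

theorem derivative_apply_eq_zero_of_unitriangular {m : Type*} [LinearOrder m] {L : 𝕜 → Matrix m m 𝕜}
    {L' : Matrix m m 𝕜} {x : 𝕜} (hL' : ∀ i j, HasDerivAt (fun t => L t i j) (L' i j) x)
    (hdiag : ∀ t i, L t i i = 1) (hupper : ∀ t i j, i < j → L t i j = 0) :
    ∀ i j, i ≤ j → L' i j = 0 := by
  intro i j hij
  rcases hij.lt_or_eq with hij | rfl
  · exact (hL' i j).unique <| by simpa only [hupper _ i j hij] using hasDerivAt_const x (0 : 𝕜)
  · exact (hL' i i).unique <| by simpa only [hdiag _ i] using hasDerivAt_const x (1 : 𝕜)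

end Matrix

theorem infinitesimal_action_on_unipotent_group_general
    (n : ℕ) (a K : Matrix (Fin n) (Fin n) ℝ)
    (hKunit : IsUnit K)
    (hKupper : ∀ i j : Fin n, i < j → K i j = 0)
    (g Lm Lp : ℝ → Matrix (Fin n) (Fin n) ℝ)
    (Lm' : Matrix (Fin n) (Fin n) ℝ)
    (hg' : ∀ i j, HasDerivAt (fun t => g t i j) (-a i j) 0)
    (hLm' : ∀ i j, HasDerivAt (fun t => Lm t i j) (Lm' i j) 0)
    (hLp' : ∀ i j, DifferentiableAt ℝ (fun t => Lp t i j) 0)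
    (hfact : ∀ t, g t * K = Lm t * Lp t)
    (hLmdiag : ∀ t i, Lm t i i = 1)
    (hLmupper : ∀ t, ∀ i j : Fin n, i < j → Lm t i j = 0)
    (hLplower : ∀ t, ∀ i j : Fin n, j < i → Lp t i j = 0)
    (hg0 : g 0 = 1) (hLm0 : Lm 0 = K) :
    Lm' = -(K * Matrix.of fun i j : Fin n =>
      if j < i then (K⁻¹ * a * K) i j else 0) := by
  have := hKunit.invertible
  have hLp0 : Lp 0 = 1 := by
    rw [← inv_mul_cancel_left_of_invertible (A := K) (Lp 0), ← hLm0, ← hfact, hg0, one_mul, hLm0,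
      inv_mul_of_invertible]
  set Lp' : Matrix (Fin n) (Fin n) ℝ := of fun i j => deriv (fun t => Lp t i j) 0
  have hLp'upper : Lp'.IsUpperTriangular := fun i j hji => by
    simp [Lp', funext (hLplower · i j hji)]
  have hderiv : Lm' + K * Lp' = -(a * K) := by
    ext i j
    have hrhs := hasDerivAt_mul_apply hLm' (B' := Lp') (fun i j => (hLp' i j).hasDerivAt) i j
    have hlhs := hasDerivAt_mul_apply (A' := -a) hg' (B' := 0)
      (fun i j => hasDerivAt_const 0 (K i j)) i j
    simp only [hfact] at hlhs
    simpa [hLp0, hLm0] using hrhs.unique hlhs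
  have hsplit : K⁻¹ * Lm' + Lp' = -(K⁻¹ * a * K) := by
    rw [← inv_mul_cancel_left_of_invertible (A := K) Lp', ← Matrix.mul_add, hderiv,
      Matrix.mul_neg, Matrix.mul_assoc]
  have hstrict : ∀ i j, i ≤ j → (K⁻¹ * Lm') i j = 0 := fun i j =>
    mul_apply_eq_zero_of_isLowerTriangular
      (blockTriangular_inv_of_blockTriangular fun i j => hKupper i j)
      (derivative_apply_eq_zero_of_unitriangular hLm' hLmdiag hLmupper)
  have hlower : K⁻¹ * Lm' = -strictLowerPart (K⁻¹ * a * K) := by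
    rw [← strictLowerPart_neg, strictLowerPart_eq_of_add_eq hstrict hLp'upper hsplit]
  calc Lm' = K * (K⁻¹ * Lm') := (mul_inv_cancel_left_of_invertible (A := K) Lm').symm
    _ = -(K * strictLowerPart (K⁻¹ * a * K)) := by rw [hlower, Matrix.mul_neg]

/-- Matrix form of the lemma `K⁻¹ 𝓛ₐ K = -(K⁻¹ a K)₋`: if `g(t)·K = L₋(t)·L₊(t)`
with `L₋` lower unitriangular and `L₊` upper triangular, `g(0) = 1`, `g′(0) = -a`,
`L₋(0) = K`, then `L₋′(0) = -K · P₋(K⁻¹ a K)` where `P₋` is the strictly lower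
triangular part. -/
theorem infinitesimal_action_on_unipotent_group
    (n : ℕ) (a K : Matrix (Fin n) (Fin n) ℝ)
    (hKunit : IsUnit K)
    (hKdiag : ∀ i, K i i = 1) (hKupper : ∀ i j : Fin n, i < j → K i j = 0)
    (g Lm Lp : ℝ → Matrix (Fin n) (Fin n) ℝ)
    (Lm' : Matrix (Fin n) (Fin n) ℝ)
    (hg' : ∀ i j, HasDerivAt (fun t => g t i j) (-a i j) 0)
    (hLm' : ∀ i j, HasDerivAt (fun t => Lm t i j) (Lm' i j) 0)
    (hLp' : ∀ i j, DifferentiableAt ℝ (fun t => Lp t i j) 0)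
    (hfact : ∀ t, g t * K = Lm t * Lp t)
    (hLmdiag : ∀ t i, Lm t i i = 1)
    (hLmupper : ∀ t, ∀ i j : Fin n, i < j → Lm t i j = 0)
    (hLplower : ∀ t, ∀ i j : Fin n, j < i → Lp t i j = 0)
    (hg0 : g 0 = 1) (hLm0 : Lm 0 = K) :
    Lm' = -(K * Matrix.of fun i j : Fin n =>
      if j < i then (K⁻¹ * a * K) i j else 0) :=
  infinitesimal_action_on_unipotent_group_general n a K hKunit hKupper g Lm Lp Lm' hg' hLm' hLp'
    hfact hLmdiag hLmupper hLplower hg0 hLm0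
end

section
/- Let φ, ψ : ℝ → ℝ be smooth (C^∞) functions such that φ′(y) > 0 and ψ′(x) > 0 for all x, y, and 1 + ψ(x)φ(y) > 0 for all x, y. Define u : ℝ × ℝ → ℝ by u(x,y) = −log(1 + ψ(x)φ(y)) + (1/2)·log(ψ′(x)·φ′(y)). Then u satisfies the Liouville equation ∂ₓ∂ᵧ u = −exp(2u) at every point. -/
/-- For smooth `φ, ψ : ℝ → ℝ` with `φ′ > 0`, `ψ′ > 0` and `1 + ψ(x)φ(y) > 0`,
the function `u(x,y) = -log(1 + ψ(x)φ(y)) + (1/2)·log(ψ′(x)·φ′(y))` solves the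
Liouville equation `∂ₓ∂ᵧ u = -exp(2u)`. -/
theorem liouville_solution_formula
    (φ ψ : ℝ → ℝ) (hφ : ContDiff ℝ (⊤ : ℕ∞) φ) (hψ : ContDiff ℝ (⊤ : ℕ∞) ψ)
    (hφ' : ∀ y : ℝ, 0 < deriv φ y) (hψ' : ∀ x : ℝ, 0 < deriv ψ x)
    (hpos : ∀ x y : ℝ, 0 < 1 + ψ x * φ y) :
    ∀ p : ℝ × ℝ,
      pdX (pdY (fun q : ℝ × ℝ =>
          -Real.log (1 + ψ q.1 * φ q.2)
            + (1 / 2) * Real.log (deriv ψ q.1 * deriv φ q.2))) p =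
        -Real.exp (2 * (-Real.log (1 + ψ p.1 * φ p.2)
            + (1 / 2) * Real.log (deriv ψ p.1 * deriv φ p.2))) := by
  rintro ⟨x, y⟩
  have hφd : Differentiable ℝ φ := hφ.differentiable (by simp)
  have hψd : Differentiable ℝ ψ := hψ.differentiable (by simp)
  have hφ'd : Differentiable ℝ (deriv φ) :=
    ((contDiff_infty_iff_deriv.mp (hφ.of_le (by simp))).2).differentiable (by simp)
  -- Step 1: compute the y-partial derivative
  have step1 : ∀ s : ℝ,
      pdY (fun q : ℝ × ℝ => -Real.log (1 + ψ q.1 * φ q.2)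
        + (1 / 2) * Real.log (deriv ψ q.1 * deriv φ q.2)) (s, y)
      = -(ψ s * deriv φ y / (1 + ψ s * φ y))
        + (1 / 2) * (deriv (deriv φ) y / deriv φ y) := by
    intro s
    have h1 : HasDerivAt (fun t => 1 + ψ s * φ t) (ψ s * deriv φ y) y :=
      (((hφd y).hasDerivAt).const_mul (ψ s)).const_add 1
    have hlog1 : HasDerivAt (fun t => Real.log (1 + ψ s * φ t))
        (ψ s * deriv φ y / (1 + ψ s * φ y)) y := h1.log (ne_of_gt (hpos s y))
    have h2 : HasDerivAt (fun t => deriv ψ s * deriv φ t)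
        (deriv ψ s * deriv (deriv φ) y) y := ((hφ'd y).hasDerivAt).const_mul _
    have hBpos : (0:ℝ) < deriv ψ s * deriv φ y := mul_pos (hψ' s) (hφ' y)
    have hlog2 : HasDerivAt (fun t => Real.log (deriv ψ s * deriv φ t))
        (deriv ψ s * deriv (deriv φ) y / (deriv ψ s * deriv φ y)) y :=
      h2.log (ne_of_gt hBpos)
    have htot := hlog1.neg.add (hlog2.const_mul (1 / 2 : ℝ))
    have hd : deriv (fun t => -Real.log (1 + ψ s * φ t) + 1 / 2 * Real.log (deriv ψ s * deriv φ t)) y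
        = -(ψ s * deriv φ y / (1 + ψ s * φ y)) + 1 / 2 * (deriv ψ s * deriv (deriv φ) y / (deriv ψ s * deriv φ y)) :=
      htot.deriv
    have hsimp : deriv ψ s * deriv (deriv φ) y / (deriv ψ s * deriv φ y)
        = deriv (deriv φ) y / deriv φ y :=
      mul_div_mul_left _ _ (ne_of_gt (hψ' s))
    simp only [pdY]
    rw [hd, hsimp]
  -- Step 2: the x-partial of the above
  have key : pdX (pdY (fun q : ℝ × ℝ => -Real.log (1 + ψ q.1 * φ q.2)
        + (1 / 2) * Real.log (deriv ψ q.1 * deriv φ q.2))) (x, y)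
      = deriv (fun s => -(ψ s * deriv φ y / (1 + ψ s * φ y))
          + (1 / 2) * (deriv (deriv φ) y / deriv φ y)) x := by
    simp only [pdX]
    congr 1
    funext s
    exact step1 s
  rw [key]
  have hnum : HasDerivAt (fun s => ψ s * deriv φ y) (deriv ψ x * deriv φ y) x :=
    ((hψd x).hasDerivAt).mul_const _
  have hden : HasDerivAt (fun s => 1 + ψ s * φ y) (deriv ψ x * φ y) x :=
    (((hψd x).hasDerivAt).mul_const _).const_add 1
  have hdiv := (hnum.div hden (ne_of_gt (hpos x y))).neg.add_const
    ((1 / 2 : ℝ) * (deriv (deriv φ) y / deriv φ y))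
  rw [show deriv (fun s => -(ψ s * deriv φ y / (1 + ψ s * φ y)) + 1 / 2 * (deriv (deriv φ) y / deriv φ y)) x = _ from
    hdiv.deriv]
  -- Now evaluate the RHS exponential
  set A := 1 + ψ x * φ y with hA
  set B := deriv ψ x * deriv φ y with hB
  have hApos : (0:ℝ) < A := hpos x y
  have hBpos : (0:ℝ) < B := mul_pos (hψ' x) (hφ' y)
  have hexp : Real.exp (2 * (-Real.log A + (1 / 2) * Real.log B)) = B / A ^ 2 := by
    rw [show 2 * (-Real.log A + (1 / 2) * Real.log B)
        = Real.log B - (Real.log A + Real.log A) by ring]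
    rw [Real.exp_sub, Real.exp_add, Real.exp_log hApos, Real.exp_log hBpos]
    rw [sq]
  rw [hexp]
  have hA0 : A ≠ 0 := ne_of_gt hApos
  field_simp
  ring
end

section
/- Let ψ₁, ψ₂, φ₁, φ₂ : ℝ → ℝ be smooth and everywhere positive. Let Ψ : ℝ → Matrix (Fin 3) (Fin 3) ℝ be smooth with Ψ(x) upper unitriangular for all x and Ψ′(x) = (ψ₁(x)E₁₂ + ψ₂(x)E₂₃)·Ψ(x), and let Φ : ℝ → Matrix (Fin 3) (Fin 3) ℝ be smooth with Φ(y) lower unitriangular for all y and Φ′(y) = Φ(y)·(φ₁(y)E₂₁ + φ₂(y)E₃₂), where E_{ij} is the elementary matrix with 1 in position (i,j). Set M(x,y) = Ψ(x)·Φ(y), ξ₁ = M₁₁ (the (1,1) entry) and ξ₂ = M₁₁M₂₂ − M₁₂M₂₁, and assume ξ₁ > 0 and ξ₂ > 0 everywhere. Then the functions u₁ = −log ξ₁ + (2/3)log(ψ₁(x)φ₁(y)) + (1/3)log(ψ₂(x)φ₂(y)) and u₂ = −log ξ₂ + (1/3)log(ψ₁(x)φ₁(y)) + (2/3)log(ψ₂(x)φ₂(y))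 satisfy the A₂ Toda field theory: ∂ₓ∂ᵧu₁ = −exp(2u₁ − u₂) and ∂ₓ∂ᵧu₂ = −exp(−u₁ + 2u₂) at every point. -/
open Matrix

/-- The differential invariants built from integral curves `Ψ, Φ` of the standard
differential systems on the upper and lower unipotent subgroups of `SL₃(ℝ)`
solve the A₂ Toda field theory. -/
theorem A2_toda_solution_from_integral_curves
    (ψ₁ ψ₂ φ₁ φ₂ : ℝ → ℝ)
    (hψ₁ : ContDiff ℝ (⊤ : ℕ∞) ψ₁) (hψ₂ : ContDiff ℝ (⊤ : ℕ∞) ψ₂)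
    (hφ₁ : ContDiff ℝ (⊤ : ℕ∞) φ₁) (hφ₂ : ContDiff ℝ (⊤ : ℕ∞) φ₂)
    (hψ₁pos : ∀ x, 0 < ψ₁ x) (hψ₂pos : ∀ x, 0 < ψ₂ x)
    (hφ₁pos : ∀ y, 0 < φ₁ y) (hφ₂pos : ∀ y, 0 < φ₂ y)
    (Ψ Φ : ℝ → Matrix (Fin 3) (Fin 3) ℝ)
    (hΨsmooth : ∀ i j : Fin 3, ContDiff ℝ (⊤ : ℕ∞) (fun x => Ψ x i j))
    (hΦsmooth : ∀ i j : Fin 3, ContDiff ℝ (⊤ : ℕ∞) (fun y => Φ y i j))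
    (hΨdiag : ∀ x, ∀ i : Fin 3, Ψ x i i = 1)
    (hΨlower : ∀ x, ∀ i j : Fin 3, j < i → Ψ x i j = 0)
    (hΦdiag : ∀ y, ∀ i : Fin 3, Φ y i i = 1)
    (hΦupper : ∀ y, ∀ i j : Fin 3, i < j → Φ y i j = 0)
    (hΨ' : ∀ x, ∀ i j : Fin 3, deriv (fun s => Ψ s i j) x =
      (((ψ₁ x • Matrix.single 0 1 1 + ψ₂ x • Matrix.single 1 2 1 : Matrix (Fin 3) (Fin 3) ℝ)) * Ψ x) i j)
    (hΦ' : ∀ y, ∀ i j : Fin 3, deriv (fun t => Φ t i j) y =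
      (Φ y * ((φ₁ y • Matrix.single 1 0 1 + φ₂ y • Matrix.single 2 1 1 : Matrix (Fin 3) (Fin 3) ℝ))) i j)
    (hξ₁pos : ∀ p : ℝ × ℝ, 0 < (Ψ p.1 * Φ p.2) 0 0)
    (hξ₂pos : ∀ p : ℝ × ℝ,
      0 < (Ψ p.1 * Φ p.2) 0 0 * (Ψ p.1 * Φ p.2) 1 1 -
        (Ψ p.1 * Φ p.2) 0 1 * (Ψ p.1 * Φ p.2) 1 0) :
    let M : ℝ × ℝ → Matrix (Fin 3) (Fin 3) ℝ := fun p => Ψ p.1 * Φ p.2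
    let ξ₁ : ℝ × ℝ → ℝ := fun p => M p 0 0
    let ξ₂ : ℝ × ℝ → ℝ := fun p => M p 0 0 * M p 1 1 - M p 0 1 * M p 1 0
    let u₁ : ℝ × ℝ → ℝ := fun p => -Real.log (ξ₁ p)
      + (2 / 3) * Real.log (ψ₁ p.1 * φ₁ p.2) + (1 / 3) * Real.log (ψ₂ p.1 * φ₂ p.2)
    let u₂ : ℝ × ℝ → ℝ := fun p => -Real.log (ξ₂ p)
      + (1 / 3) * Real.log (ψ₁ p.1 * φ₁ p.2) + (2 / 3) * Real.log (ψ₂ p.1 * φ₂ p.2)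
    ∀ p : ℝ × ℝ,
      pdX (pdY u₁) p = -Real.exp (2 * u₁ p - u₂ p) ∧
      pdX (pdY u₂) p = -Real.exp (-u₁ p + 2 * u₂ p) := by
  intro M ξ₁ ξ₂ u₁ u₂ p
  obtain ⟨x, y⟩ := p
  -- entry derivative facts
  have ha : ∀ s, HasDerivAt (fun s => Ψ s 0 1) (ψ₁ s) s := by
    intro s
    have h := ((hΨsmooth 0 1).differentiable (by simp) s).hasDerivAt
    rw [hΨ' s 0 1] at h
    simpa [Matrix.mul_apply, Fin.sum_univ_three, Matrix.single, Matrix.of_apply,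
      hΨdiag s] using h
  have hb : ∀ s, HasDerivAt (fun s => Ψ s 0 2) (ψ₁ s * Ψ s 1 2) s := by
    intro s
    have h := ((hΨsmooth 0 2).differentiable (by simp) s).hasDerivAt
    rw [hΨ' s 0 2] at h
    simpa [Matrix.mul_apply, Fin.sum_univ_three, Matrix.single, Matrix.of_apply,
      hΨdiag s] using h
  have hc : ∀ s, HasDerivAt (fun s => Ψ s 1 2) (ψ₂ s) s := by
    intro s
    have h := ((hΨsmooth 1 2).differentiable (by simp) s).hasDerivAt
    rw [hΨ' s 1 2] at h
    simpa [Matrix.mul_apply, Fin.sum_univ_three, Matrix.single, Matrix.of_apply,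
      hΨdiag s] using h
  have hd : ∀ t, HasDerivAt (fun t => Φ t 1 0) (φ₁ t) t := by
    intro t
    have h := ((hΦsmooth 1 0).differentiable (by simp) t).hasDerivAt
    rw [hΦ' t 1 0] at h
    simpa [Matrix.mul_apply, Fin.sum_univ_three, Matrix.single, Matrix.of_apply,
      hΦdiag t] using h
  have he : ∀ t, HasDerivAt (fun t => Φ t 2 0) (Φ t 2 1 * φ₁ t) t := by
    intro t
    have h := ((hΦsmooth 2 0).differentiable (by simp) t).hasDerivAt
    rw [hΦ' t 2 0] at h
    simpa [Matrix.mul_apply, Fin.sum_univ_three, Matrix.single, Matrix.of_apply,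
      hΦdiag t] using h
  have hf : ∀ t, HasDerivAt (fun t => Φ t 2 1) (φ₂ t) t := by
    intro t
    have h := ((hΦsmooth 2 1).differentiable (by simp) t).hasDerivAt
    rw [hΦ' t 2 1] at h
    simpa [Matrix.mul_apply, Fin.sum_univ_three, Matrix.single, Matrix.of_apply,
      hΦdiag t] using h
  -- entry expansions
  have hM00 : ∀ s t, (Ψ s * Φ t) 0 0 = 1 + Ψ s 0 1 * Φ t 1 0 + Ψ s 0 2 * Φ t 2 0 := by
    intro s t
    rw [Matrix.mul_apply, Fin.sum_univ_three, hΨdiag s 0, hΦdiag t 0]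
    ring
  have hM01 : ∀ s t, (Ψ s * Φ t) 0 1 = Ψ s 0 1 + Ψ s 0 2 * Φ t 2 1 := by
    intro s t
    rw [Matrix.mul_apply, Fin.sum_univ_three, hΨdiag s 0, hΦdiag t 1,
      hΦupper t 0 1 (by decide)]
    ring
  have hM10 : ∀ s t, (Ψ s * Φ t) 1 0 = Φ t 1 0 + Ψ s 1 2 * Φ t 2 0 := by
    intro s t
    rw [Matrix.mul_apply, Fin.sum_univ_three, hΨdiag s 1, hΦdiag t 0,
      hΨlower s 1 0 (by decide)]
    ring
  have hM11 : ∀ s t, (Ψ s * Φ t) 1 1 = 1 + Ψ s 1 2 * Φ t 2 1 := by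
    intro s t
    rw [Matrix.mul_apply, Fin.sum_univ_three, hΨdiag s 1, hΦdiag t 1,
      hΨlower s 1 0 (by decide), hΦupper t 0 1 (by decide)]
    ring
  have hXi2 : ∀ s t, (Ψ s * Φ t) 0 0 * (Ψ s * Φ t) 1 1 - (Ψ s * Φ t) 0 1 * (Ψ s * Φ t) 1 0
      = (1 + Ψ s 0 1 * Φ t 1 0 + Ψ s 0 2 * Φ t 2 0) * (1 + Ψ s 1 2 * Φ t 2 1)
        - (Ψ s 0 1 + Ψ s 0 2 * Φ t 2 1) * (Φ t 1 0 + Ψ s 1 2 * Φ t 2 0) := by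
    intro s t
    rw [hM00, hM01, hM10, hM11]
  -- positivity, nonvanishing
  have hS1pos : 0 < (Ψ x * Φ y) 0 0 := hξ₁pos (x, y)
  have hS2pos : 0 < (Ψ x * Φ y) 0 0 * (Ψ x * Φ y) 1 1 - (Ψ x * Φ y) 0 1 * (Ψ x * Φ y) 1 0 :=
    hξ₂pos (x, y)
  -- log terms in y
  have hlog1 : ∀ s t, HasDerivAt (fun t => Real.log (ψ₁ s * φ₁ t)) (deriv φ₁ t / φ₁ t) t := by
    intro s t
    have h := ((((hφ₁.differentiable (by simp)) t).hasDerivAt).const_mul (ψ₁ s)).log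
      (by have := hψ₁pos s; have := hφ₁pos t; positivity)
    rwa [mul_div_mul_left _ _ (ne_of_gt (hψ₁pos s))] at h
  have hlog2 : ∀ s t, HasDerivAt (fun t => Real.log (ψ₂ s * φ₂ t)) (deriv φ₂ t / φ₂ t) t := by
    intro s t
    have h := ((((hφ₂.differentiable (by simp)) t).hasDerivAt).const_mul (ψ₂ s)).log
      (by have := hψ₂pos s; have := hφ₂pos t; positivity)
    rwa [mul_div_mul_left _ _ (ne_of_gt (hψ₂pos s))] at h
  -- y-derivative of ξ₁(s,·)
  have hden1y : ∀ s t, HasDerivAt (fun t => (Ψ s * Φ t) 0 0)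
      (φ₁ t * (Ψ s 0 1 + Ψ s 0 2 * Φ t 2 1)) t := by
    intro s t
    have hfe : (fun t => (Ψ s * Φ t) 0 0)
        = fun t => 1 + Ψ s 0 1 * Φ t 1 0 + Ψ s 0 2 * Φ t 2 0 := funext fun t => hM00 s t
    rw [hfe]
    have h := (((hd t).const_mul (Ψ s 0 1)).const_add 1).add ((he t).const_mul (Ψ s 0 2))
    refine h.congr_deriv ?_
    ring
  -- y-derivative of ξ₂(s,·)
  have hden2y : ∀ s t, HasDerivAt
      (fun t => (Ψ s * Φ t) 0 0 * (Ψ s * Φ t) 1 1 - (Ψ s * Φ t) 0 1 * (Ψ s * Φ t) 1 0)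
      (φ₂ t * (Ψ s 1 2 + Φ t 1 0 * (Ψ s 0 1 * Ψ s 1 2 - Ψ s 0 2))) t := by
    intro s t
    have hfe : (fun t =>
        (Ψ s * Φ t) 0 0 * (Ψ s * Φ t) 1 1 - (Ψ s * Φ t) 0 1 * (Ψ s * Φ t) 1 0)
        = fun t => (1 + Ψ s 0 1 * Φ t 1 0 + Ψ s 0 2 * Φ t 2 0) * (1 + Ψ s 1 2 * Φ t 2 1)
          - (Ψ s 0 1 + Ψ s 0 2 * Φ t 2 1) * (Φ t 1 0 + Ψ s 1 2 * Φ t 2 0) :=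
      funext fun t => hXi2 s t
    rw [hfe]
    have hE1 : HasDerivAt (fun t => 1 + Ψ s 0 1 * Φ t 1 0 + Ψ s 0 2 * Φ t 2 0)
        (Ψ s 0 1 * φ₁ t + Ψ s 0 2 * (Φ t 2 1 * φ₁ t)) t :=
      (((hd t).const_mul (Ψ s 0 1)).const_add 1).add ((he t).const_mul (Ψ s 0 2))
    have hE2 : HasDerivAt (fun t => 1 + Ψ s 1 2 * Φ t 2 1) (Ψ s 1 2 * φ₂ t) t :=
      ((hf t).const_mul (Ψ s 1 2)).const_add 1
    have hE3 : HasDerivAt (fun t => Ψ s 0 1 + Ψ s 0 2 * Φ t 2 1) (Ψ s 0 2 * φ₂ t) t :=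
      ((hf t).const_mul (Ψ s 0 2)).const_add (Ψ s 0 1)
    have hE4 : HasDerivAt (fun t => Φ t 1 0 + Ψ s 1 2 * Φ t 2 0)
        (φ₁ t + Ψ s 1 2 * (Φ t 2 1 * φ₁ t)) t :=
      (hd t).add ((he t).const_mul (Ψ s 1 2))
    have h := (hE1.mul hE2).sub (hE3.mul hE4)
    refine h.congr_deriv ?_
    ring
  -- full y-derivatives of u₁, u₂
  have hu₁y : ∀ s t, HasDerivAt (fun t => u₁ (s, t))
      (-(φ₁ t * (Ψ s 0 1 + Ψ s 0 2 * Φ t 2 1) / (Ψ s * Φ t) 0 0)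
        + 2 / 3 * (deriv φ₁ t / φ₁ t) + 1 / 3 * (deriv φ₂ t / φ₂ t)) t := by
    intro s t
    exact (((hden1y s t).log (ne_of_gt (hξ₁pos (s, t)))).neg.add
      ((hlog1 s t).const_mul (2 / 3))).add ((hlog2 s t).const_mul (1 / 3))
  have hu₂y : ∀ s t, HasDerivAt (fun t => u₂ (s, t))
      (-(φ₂ t * (Ψ s 1 2 + Φ t 1 0 * (Ψ s 0 1 * Ψ s 1 2 - Ψ s 0 2))
          / ((Ψ s * Φ t) 0 0 * (Ψ s * Φ t) 1 1 - (Ψ s * Φ t) 0 1 * (Ψ s * Φ t) 1 0))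
        + 1 / 3 * (deriv φ₁ t / φ₁ t) + 2 / 3 * (deriv φ₂ t / φ₂ t)) t := by
    intro s t
    exact (((hden2y s t).log (ne_of_gt (hξ₂pos (s, t)))).neg.add
      ((hlog1 s t).const_mul (1 / 3))).add ((hlog2 s t).const_mul (2 / 3))
  have hpdY1 : ∀ s, pdY u₁ (s, y)
      = -(φ₁ y * (Ψ s 0 1 + Ψ s 0 2 * Φ y 2 1) / (Ψ s * Φ y) 0 0)
        + 2 / 3 * (deriv φ₁ y / φ₁ y) + 1 / 3 * (deriv φ₂ y / φ₂ y) :=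
    fun s => (hu₁y s y).deriv
  have hpdY2 : ∀ s, pdY u₂ (s, y)
      = -(φ₂ y * (Ψ s 1 2 + Φ y 1 0 * (Ψ s 0 1 * Ψ s 1 2 - Ψ s 0 2))
          / ((Ψ s * Φ y) 0 0 * (Ψ s * Φ y) 1 1 - (Ψ s * Φ y) 0 1 * (Ψ s * Φ y) 1 0))
        + 1 / 3 * (deriv φ₁ y / φ₁ y) + 2 / 3 * (deriv φ₂ y / φ₂ y) :=
    fun s => (hu₂y s y).deriv
  -- nonvanishing in polynomial form
  have h1ne : (1 + Ψ x 0 1 * Φ y 1 0 + Ψ x 0 2 * Φ y 2 0) ≠ 0 := by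
    rw [← hM00 x y]; exact ne_of_gt hS1pos
  have h2ne : ((1 + Ψ x 0 1 * Φ y 1 0 + Ψ x 0 2 * Φ y 2 0) * (1 + Ψ x 1 2 * Φ y 2 1)
      - (Ψ x 0 1 + Ψ x 0 2 * Φ y 2 1) * (Φ y 1 0 + Ψ x 1 2 * Φ y 2 0)) ≠ 0 := by
    rw [← hXi2 x y]; exact ne_of_gt hS2pos
  -- x-derivatives of denominators
  have hden1x : HasDerivAt (fun s => (Ψ s * Φ y) 0 0)
      (ψ₁ x * (Φ y 1 0 + Ψ x 1 2 * Φ y 2 0)) x := by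
    have hfe : (fun s => (Ψ s * Φ y) 0 0)
        = fun s => 1 + Ψ s 0 1 * Φ y 1 0 + Ψ s 0 2 * Φ y 2 0 := funext fun s => hM00 s y
    rw [hfe]
    have h := (((ha x).mul_const (Φ y 1 0)).const_add 1).add ((hb x).mul_const (Φ y 2 0))
    refine h.congr_deriv ?_
    ring
  have hden2x : HasDerivAt
      (fun s => (Ψ s * Φ y) 0 0 * (Ψ s * Φ y) 1 1 - (Ψ s * Φ y) 0 1 * (Ψ s * Φ y) 1 0)
      (ψ₂ x * (Φ y 2 1 + Ψ x 0 1 * (Φ y 1 0 * Φ y 2 1 - Φ y 2 0))) x := by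
    have hfe : (fun s =>
        (Ψ s * Φ y) 0 0 * (Ψ s * Φ y) 1 1 - (Ψ s * Φ y) 0 1 * (Ψ s * Φ y) 1 0)
        = fun s => (1 + Ψ s 0 1 * Φ y 1 0 + Ψ s 0 2 * Φ y 2 0) * (1 + Ψ s 1 2 * Φ y 2 1)
          - (Ψ s 0 1 + Ψ s 0 2 * Φ y 2 1) * (Φ y 1 0 + Ψ s 1 2 * Φ y 2 0) :=
      funext fun s => hXi2 s y
    rw [hfe]
    have hE1 : HasDerivAt (fun s => 1 + Ψ s 0 1 * Φ y 1 0 + Ψ s 0 2 * Φ y 2 0)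
        (ψ₁ x * Φ y 1 0 + ψ₁ x * Ψ x 1 2 * Φ y 2 0) x :=
      (((ha x).mul_const (Φ y 1 0)).const_add 1).add ((hb x).mul_const (Φ y 2 0))
    have hE2 : HasDerivAt (fun s => 1 + Ψ s 1 2 * Φ y 2 1) (ψ₂ x * Φ y 2 1) x :=
      ((hc x).mul_const (Φ y 2 1)).const_add 1
    have hE3 : HasDerivAt (fun s => Ψ s 0 1 + Ψ s 0 2 * Φ y 2 1)
        (ψ₁ x + ψ₁ x * Ψ x 1 2 * Φ y 2 1) x :=
      (ha x).add ((hb x).mul_const (Φ y 2 1))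
    have hE4 : HasDerivAt (fun s => Φ y 1 0 + Ψ s 1 2 * Φ y 2 0)
        (ψ₂ x * Φ y 2 0) x :=
      ((hc x).mul_const (Φ y 2 0)).const_add (Φ y 1 0)
    have h := (hE1.mul hE2).sub (hE3.mul hE4)
    refine h.congr_deriv ?_
    ring
  -- x-derivatives of numerators
  have hnum1x : HasDerivAt (fun s => φ₁ y * (Ψ s 0 1 + Ψ s 0 2 * Φ y 2 1))
      (φ₁ y * (ψ₁ x + ψ₁ x * Ψ x 1 2 * Φ y 2 1)) x :=
    ((ha x).add ((hb x).mul_const (Φ y 2 1))).const_mul (φ₁ y)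
  have hnum2x : HasDerivAt
      (fun s => φ₂ y * (Ψ s 1 2 + Φ y 1 0 * (Ψ s 0 1 * Ψ s 1 2 - Ψ s 0 2)))
      (φ₂ y * (ψ₂ x + Φ y 1 0 * ((ψ₁ x * Ψ x 1 2 + Ψ x 0 1 * ψ₂ x) - ψ₁ x * Ψ x 1 2))) x :=
    ((hc x).add ((((ha x).mul (hc x)).sub (hb x)).const_mul (Φ y 1 0))).const_mul (φ₂ y)
  -- main x-derivative computations
  have hmain1 : HasDerivAt
      (fun s => -(φ₁ y * (Ψ s 0 1 + Ψ s 0 2 * Φ y 2 1) / (Ψ s * Φ y) 0 0)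
        + 2 / 3 * (deriv φ₁ y / φ₁ y) + 1 / 3 * (deriv φ₂ y / φ₂ y))
      (-(ψ₁ x * φ₁ y
          * ((Ψ x * Φ y) 0 0 * (Ψ x * Φ y) 1 1 - (Ψ x * Φ y) 0 1 * (Ψ x * Φ y) 1 0)
          / ((Ψ x * Φ y) 0 0) ^ 2)) x := by
    have h := (((hnum1x.div hden1x (ne_of_gt hS1pos)).neg).add_const
        (2 / 3 * (deriv φ₁ y / φ₁ y))).add_const (1 / 3 * (deriv φ₂ y / φ₂ y))
    refine h.congr_deriv ?_
    rw [hXi2 x y, hM00 x y]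
    field_simp
  have hmain2 : HasDerivAt
      (fun s => -(φ₂ y * (Ψ s 1 2 + Φ y 1 0 * (Ψ s 0 1 * Ψ s 1 2 - Ψ s 0 2))
          / ((Ψ s * Φ y) 0 0 * (Ψ s * Φ y) 1 1 - (Ψ s * Φ y) 0 1 * (Ψ s * Φ y) 1 0))
        + 1 / 3 * (deriv φ₁ y / φ₁ y) + 2 / 3 * (deriv φ₂ y / φ₂ y))
      (-(ψ₂ x * φ₂ y * (Ψ x * Φ y) 0 0
          / ((Ψ x * Φ y) 0 0 * (Ψ x * Φ y) 1 1 - (Ψ x * Φ y) 0 1 * (Ψ x * Φ y) 1 0) ^ 2)) x := by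
    have h := (((hnum2x.div hden2x (ne_of_gt hS2pos)).neg).add_const
        (1 / 3 * (deriv φ₁ y / φ₁ y))).add_const (2 / 3 * (deriv φ₂ y / φ₂ y))
    refine h.congr_deriv ?_
    rw [hXi2 x y, hM00 x y]
    field_simp
    ring
  -- identify pdX (pdY u)
  have hfe1 : (fun s => pdY u₁ (s, y))
      = fun s => -(φ₁ y * (Ψ s 0 1 + Ψ s 0 2 * Φ y 2 1) / (Ψ s * Φ y) 0 0)
        + 2 / 3 * (deriv φ₁ y / φ₁ y) + 1 / 3 * (deriv φ₂ y / φ₂ y) :=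
    funext fun s => hpdY1 s
  have hfe2 : (fun s => pdY u₂ (s, y))
      = fun s => -(φ₂ y * (Ψ s 1 2 + Φ y 1 0 * (Ψ s 0 1 * Ψ s 1 2 - Ψ s 0 2))
          / ((Ψ s * Φ y) 0 0 * (Ψ s * Φ y) 1 1 - (Ψ s * Φ y) 0 1 * (Ψ s * Φ y) 1 0))
        + 1 / 3 * (deriv φ₁ y / φ₁ y) + 2 / 3 * (deriv φ₂ y / φ₂ y) :=
    funext fun s => hpdY2 s
  have hlhs1 : pdX (pdY u₁) (x, y)
      = -(ψ₁ x * φ₁ y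
          * ((Ψ x * Φ y) 0 0 * (Ψ x * Φ y) 1 1 - (Ψ x * Φ y) 0 1 * (Ψ x * Φ y) 1 0)
          / ((Ψ x * Φ y) 0 0) ^ 2) := by
    show deriv (fun s => pdY u₁ (s, y)) x = _
    rw [hfe1]
    exact hmain1.deriv
  have hlhs2 : pdX (pdY u₂) (x, y)
      = -(ψ₂ x * φ₂ y * (Ψ x * Φ y) 0 0
          / ((Ψ x * Φ y) 0 0 * (Ψ x * Φ y) 1 1 - (Ψ x * Φ y) 0 1 * (Ψ x * Φ y) 1 0) ^ 2) := by
    show deriv (fun s => pdY u₂ (s, y)) x = _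
    rw [hfe2]
    exact hmain2.deriv
  -- right-hand sides
  have hrhs1 : Real.exp (2 * u₁ (x, y) - u₂ (x, y))
      = ψ₁ x * φ₁ y
          * ((Ψ x * Φ y) 0 0 * (Ψ x * Φ y) 1 1 - (Ψ x * Φ y) 0 1 * (Ψ x * Φ y) 1 0)
          / ((Ψ x * Φ y) 0 0) ^ 2 := by
    have harg : 2 * u₁ (x, y) - u₂ (x, y)
        = Real.log (ψ₁ x * φ₁ y)
          + (Real.log ((Ψ x * Φ y) 0 0 * (Ψ x * Φ y) 1 1 - (Ψ x * Φ y) 0 1 * (Ψ x * Φ y) 1 0)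
            - 2 * Real.log ((Ψ x * Φ y) 0 0)) := by
      show 2 * (-Real.log ((Ψ x * Φ y) 0 0) + 2 / 3 * Real.log (ψ₁ x * φ₁ y)
          + 1 / 3 * Real.log (ψ₂ x * φ₂ y))
        - (-Real.log ((Ψ x * Φ y) 0 0 * (Ψ x * Φ y) 1 1 - (Ψ x * Φ y) 0 1 * (Ψ x * Φ y) 1 0)
          + 1 / 3 * Real.log (ψ₁ x * φ₁ y) + 2 / 3 * Real.log (ψ₂ x * φ₂ y)) = _
      ring
    rw [harg, Real.exp_add, Real.exp_sub, Real.exp_log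
        (by have := hψ₁pos x; have := hφ₁pos y; positivity),
      Real.exp_log hS2pos, two_mul, Real.exp_add, Real.exp_log hS1pos]
    ring
  have hrhs2 : Real.exp (-u₁ (x, y) + 2 * u₂ (x, y))
      = ψ₂ x * φ₂ y * (Ψ x * Φ y) 0 0
          / ((Ψ x * Φ y) 0 0 * (Ψ x * Φ y) 1 1 - (Ψ x * Φ y) 0 1 * (Ψ x * Φ y) 1 0) ^ 2 := by
    have harg : -u₁ (x, y) + 2 * u₂ (x, y)
        = Real.log (ψ₂ x * φ₂ y)
          + (Real.log ((Ψ x * Φ y) 0 0)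
            - 2 * Real.log ((Ψ x * Φ y) 0 0 * (Ψ x * Φ y) 1 1
              - (Ψ x * Φ y) 0 1 * (Ψ x * Φ y) 1 0)) := by
      show -(-Real.log ((Ψ x * Φ y) 0 0) + 2 / 3 * Real.log (ψ₁ x * φ₁ y)
          + 1 / 3 * Real.log (ψ₂ x * φ₂ y))
        + 2 * (-Real.log ((Ψ x * Φ y) 0 0 * (Ψ x * Φ y) 1 1
            - (Ψ x * Φ y) 0 1 * (Ψ x * Φ y) 1 0)
          + 1 / 3 * Real.log (ψ₁ x * φ₁ y) + 2 / 3 * Real.log (ψ₂ x * φ₂ y)) = _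
      ring
    rw [harg, Real.exp_add, Real.exp_sub, Real.exp_log
        (by have := hψ₂pos x; have := hφ₂pos y; positivity),
      Real.exp_log hS1pos, two_mul, Real.exp_add, Real.exp_log hS2pos]
    ring
  exact ⟨by rw [hlhs1, hrhs1], by rw [hlhs2, hrhs2]⟩
end

section
/- Let ψ₁, ψ₂, φ₁, φ₂ : ℝ → ℝ be continuous, and let M : ℝ × ℝ → Matrix (Fin 3) (Fin 3) ℝ be a smooth matrix-valued function satisfying ∂ₓM(x,y) = (ψ₁(x)E₁₂ + ψ₂(x)E₂₃)·M(x,y) and ∂ᵧM(x,y) = M(x,y)·(φ₁(y)E₂₁ + φ₂(y)E₃₂) at every point, where E_{ij} is the elementary matrix with 1 in position (i,j). Set ξ₁ = M₁₁ (the (1,1) entry). Then at every point, ξ₁·∂ₓ∂ᵧξ₁ − (∂ₓξ₁)·(∂ᵧξ₁) = ψ₁(x)·φ₁(y)·(M₁₁M₂₂ − M₁₂M₂₁). -/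
open Matrix

/-- For `M` satisfying `∂ₓM = (ψ₁E₁₂ + ψ₂E₂₃)M` and `∂ᵧM = M(φ₁E₂₁ + φ₂E₃₂)`,
the (1,1) entry `ξ₁ = M₁₁` satisfies
`ξ₁·∂ₓ∂ᵧξ₁ − (∂ₓξ₁)(∂ᵧξ₁) = ψ₁φ₁(M₁₁M₂₂ − M₁₂M₂₁)`. -/
theorem A2_jacobi_identity_xi1
    (ψ₁ ψ₂ φ₁ φ₂ : ℝ → ℝ) (hψ₁ : Continuous ψ₁) (hψ₂ : Continuous ψ₂)
    (hφ₁ : Continuous φ₁) (hφ₂ : Continuous φ₂)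
    (M : ℝ × ℝ → Matrix (Fin 3) (Fin 3) ℝ)
    (hMsmooth : ∀ i j : Fin 3, ContDiff ℝ (⊤ : ℕ∞) (fun p => M p i j))
    (hMx : ∀ p : ℝ × ℝ, ∀ i j : Fin 3, pdX (fun q => M q i j) p =
      (((ψ₁ p.1 • Matrix.single 0 1 1 + ψ₂ p.1 • Matrix.single 1 2 1 :
          Matrix (Fin 3) (Fin 3) ℝ)) * M p) i j)
    (hMy : ∀ p : ℝ × ℝ, ∀ i j : Fin 3, pdY (fun q => M q i j) p =
      (M p * ((φ₁ p.2 • Matrix.single 1 0 1 + φ₂ p.2 • Matrix.single 2 1 1 :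
          Matrix (Fin 3) (Fin 3) ℝ))) i j) :
    ∀ p : ℝ × ℝ,
      (M p 0 0) * pdX (pdY (fun q => M q 0 0)) p -
          pdX (fun q => M q 0 0) p * pdY (fun q => M q 0 0) p =
        ψ₁ p.1 * φ₁ p.2 * (M p 0 0 * M p 1 1 - M p 0 1 * M p 1 0) := by
  intro p
  -- entrywise form of the ODEs
  have hy00 : ∀ q : ℝ × ℝ, pdY (fun q => M q 0 0) q = φ₁ q.2 * M q 0 1 := by
    intro q
    rw [hMy q 0 0]
    simp [mul_apply, Fin.sum_univ_three, Matrix.single, mul_comm]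
  have hx00 : pdX (fun q => M q 0 0) p = ψ₁ p.1 * M p 1 0 := by
    rw [hMx p 0 0]
    simp [mul_apply, Fin.sum_univ_three, Matrix.single]
  have hx01 : pdX (fun q => M q 0 1) p = ψ₁ p.1 * M p 1 1 := by
    rw [hMx p 0 1]
    simp [mul_apply, Fin.sum_univ_three, Matrix.single]
  have hdiff : DifferentiableAt ℝ (fun s => M (s, p.2) 0 1) p.1 := by
    have : Differentiable ℝ (fun q : ℝ × ℝ => M q 0 1) :=
      (hMsmooth 0 1).differentiable (by simp)
    exact (this (p.1, p.2)).comp p.1 (differentiableAt_id.prodMk (differentiableAt_const p.2) :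
      DifferentiableAt ℝ (fun s : ℝ => (s, p.2)) p.1)
  have hxy : pdX (pdY (fun q => M q 0 0)) p = φ₁ p.2 * (ψ₁ p.1 * M p 1 1) := by
    have h1 : pdX (pdY (fun q => M q 0 0)) p
        = pdX (fun q => φ₁ q.2 * M q 0 1) p := by
      unfold pdX
      congr 1
      funext s
      exact hy00 (s, p.2)
    rw [h1]
    unfold pdX
    have : (fun s => (fun q : ℝ × ℝ => φ₁ q.2 * M q 0 1) (s, p.2))
        = fun s => φ₁ p.2 * M (s, p.2) 0 1 := rfl
    rw [this, deriv_const_mul _ hdiff]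
    rw [← hx01, pdX]
  rw [hxy, hx00, hy00 p]
  ring
end

section
/- Let ψ₁, ψ₂, φ₁, φ₂ : ℝ → ℝ be continuous, and let M : ℝ × ℝ → Matrix (Fin 3) (Fin 3) ℝ be a smooth matrix-valued function satisfying ∂ₓM(x,y) = (ψ₁(x)E₁₂ + ψ₂(x)E₂₃)·M(x,y) and ∂ᵧM(x,y) = M(x,y)·(φ₁(y)E₂₁ + φ₂(y)E₃₂) at every point, where E_{ij} is the elementary matrix with 1 in position (i,j). Set ξ₂ = M₁₁M₂₂ − M₁₂M₂₁ (the upper-left 2×2 minor of M). Then at every point, ξ₂·∂ₓ∂ᵧξ₂ − (∂ₓξ₂)·(∂ᵧξ₂) = ψ₂(x)·φ₂(y)·M₁₁·det M. -/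
open Matrix

/-- For `M` satisfying `∂ₓM = (ψ₁E₁₂ + ψ₂E₂₃)M` and `∂ᵧM = M(φ₁E₂₁ + φ₂E₃₂)`,
the upper-left 2×2 minor `ξ₂ = M₁₁M₂₂ − M₁₂M₂₁` satisfies
`ξ₂·∂ₓ∂ᵧξ₂ − (∂ₓξ₂)(∂ᵧξ₂) = ψ₂φ₂·M₁₁·det M`. -/
theorem A2_jacobi_identity_xi2
    (ψ₁ ψ₂ φ₁ φ₂ : ℝ → ℝ) (hψ₁ : Continuous ψ₁) (hψ₂ : Continuous ψ₂)
    (hφ₁ : Continuous φ₁) (hφ₂ : Continuous φ₂)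
    (M : ℝ × ℝ → Matrix (Fin 3) (Fin 3) ℝ)
    (hMsmooth : ∀ i j : Fin 3, ContDiff ℝ (⊤ : ℕ∞) (fun p => M p i j))
    (hMx : ∀ p : ℝ × ℝ, ∀ i j : Fin 3, pdX (fun q => M q i j) p =
      (((ψ₁ p.1 • Matrix.single 0 1 1 + ψ₂ p.1 • Matrix.single 1 2 1 :
          Matrix (Fin 3) (Fin 3) ℝ)) * M p) i j)
    (hMy : ∀ p : ℝ × ℝ, ∀ i j : Fin 3, pdY (fun q => M q i j) p =
      (M p * ((φ₁ p.2 • Matrix.single 1 0 1 + φ₂ p.2 • Matrix.single 2 1 1 :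
          Matrix (Fin 3) (Fin 3) ℝ))) i j) :
    ∀ p : ℝ × ℝ,
      (M p 0 0 * M p 1 1 - M p 0 1 * M p 1 0) *
          pdX (pdY (fun q => M q 0 0 * M q 1 1 - M q 0 1 * M q 1 0)) p -
          pdX (fun q => M q 0 0 * M q 1 1 - M q 0 1 * M q 1 0) p *
            pdY (fun q => M q 0 0 * M q 1 1 - M q 0 1 * M q 1 0) p =
        ψ₂ p.1 * φ₂ p.2 * M p 0 0 * (M p).det := by
  have hdiff : ∀ i j : Fin 3, Differentiable ℝ (fun p : ℝ × ℝ => M p i j) :=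
    fun i j => (hMsmooth i j).differentiable (by simp)
  have hdY : ∀ (x : ℝ) (i j : Fin 3), Differentiable ℝ (fun t => M (x, t) i j) :=
    fun x i j => (hdiff i j).comp ((differentiable_const x).prodMk differentiable_id)
  have hdX : ∀ (y : ℝ) (i j : Fin 3), Differentiable ℝ (fun s => M (s, y) i j) :=
    fun y i j => (hdiff i j).comp (differentiable_id.prodMk (differentiable_const y))
  -- y-derivatives of entries
  have hy : ∀ q : ℝ × ℝ, ∀ i : Fin 3,
      deriv (fun t => M (q.1, t) i 0) q.2 = M q i 1 * φ₁ q.2 ∧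
      deriv (fun t => M (q.1, t) i 1) q.2 = M q i 2 * φ₂ q.2 := by
    intro q i
    have h0 := hMy q i 0
    have h1 := hMy q i 1
    simp [Matrix.mul_apply, Fin.sum_univ_three, Matrix.single] at h0 h1
    exact ⟨h0, h1⟩
  -- x-derivatives of entries
  have hx : ∀ q : ℝ × ℝ, ∀ j : Fin 3,
      deriv (fun s => M (s, q.2) 0 j) q.1 = ψ₁ q.1 * M q 1 j ∧
      deriv (fun s => M (s, q.2) 1 j) q.1 = ψ₂ q.1 * M q 2 j := by
    intro q j
    have h0 := hMx q 0 j
    have h1 := hMx q 1 j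
    simp [Matrix.mul_apply, Fin.sum_univ_three, Matrix.single] at h0 h1
    exact ⟨h0, h1⟩
  -- pdY of ξ₂
  have hpdYxi : ∀ q : ℝ × ℝ,
      pdY (fun r => M r 0 0 * M r 1 1 - M r 0 1 * M r 1 0) q =
        φ₂ q.2 * (M q 0 0 * M q 1 2 - M q 0 2 * M q 1 0) := by
    intro q
    unfold pdY
    rw [deriv_fun_sub (((hdY q.1 0 0) q.2).fun_mul ((hdY q.1 1 1) q.2))
        (((hdY q.1 0 1) q.2).fun_mul ((hdY q.1 1 0) q.2)),
      deriv_fun_mul ((hdY q.1 0 0) q.2) ((hdY q.1 1 1) q.2),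
      deriv_fun_mul ((hdY q.1 0 1) q.2) ((hdY q.1 1 0) q.2),
      (hy q 0).1, (hy q 1).2, (hy q 0).2, (hy q 1).1]
    simp only [Prod.mk.eta]
    ring
  intro p
  -- pdX of ξ₂
  have hpdXxi : pdX (fun q => M q 0 0 * M q 1 1 - M q 0 1 * M q 1 0) p =
      ψ₂ p.1 * (M p 0 0 * M p 2 1 - M p 0 1 * M p 2 0) := by
    unfold pdX
    rw [deriv_fun_sub (((hdX p.2 0 0) p.1).fun_mul ((hdX p.2 1 1) p.1))
        (((hdX p.2 0 1) p.1).fun_mul ((hdX p.2 1 0) p.1)),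
      deriv_fun_mul ((hdX p.2 0 0) p.1) ((hdX p.2 1 1) p.1),
      deriv_fun_mul ((hdX p.2 0 1) p.1) ((hdX p.2 1 0) p.1),
      (hx p 0).1, (hx p 1).2, (hx p 0).2, (hx p 1).1]
    simp only [Prod.mk.eta]
    ring
  -- pdX of η = M00 M12 - M02 M10
  have hpdXeta : deriv (fun s => M (s, p.2) 0 0 * M (s, p.2) 1 2 -
      M (s, p.2) 0 2 * M (s, p.2) 1 0) p.1 =
      ψ₂ p.1 * (M p 0 0 * M p 2 2 - M p 0 2 * M p 2 0) := by
    rw [deriv_fun_sub (((hdX p.2 0 0) p.1).fun_mul ((hdX p.2 1 2) p.1))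
        (((hdX p.2 0 2) p.1).fun_mul ((hdX p.2 1 0) p.1)),
      deriv_fun_mul ((hdX p.2 0 0) p.1) ((hdX p.2 1 2) p.1),
      deriv_fun_mul ((hdX p.2 0 2) p.1) ((hdX p.2 1 0) p.1),
      (hx p 0).1, (hx p 2).2, (hx p 2).1, (hx p 0).2]
    simp only [Prod.mk.eta]
    ring
  -- mixed derivative
  have hnest : pdX (pdY (fun q => M q 0 0 * M q 1 1 - M q 0 1 * M q 1 0)) p =
      φ₂ p.2 * (ψ₂ p.1 * (M p 0 0 * M p 2 2 - M p 0 2 * M p 2 0)) := by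
    unfold pdX
    have hfun : (fun s => pdY (fun r => M r 0 0 * M r 1 1 - M r 0 1 * M r 1 0) (s, p.2)) =
        fun s => φ₂ p.2 * (M (s, p.2) 0 0 * M (s, p.2) 1 2 - M (s, p.2) 0 2 * M (s, p.2) 1 0) := by
      funext s
      exact hpdYxi (s, p.2)
    rw [hfun, deriv_const_mul _ ((((hdX p.2 0 0) p.1).fun_mul ((hdX p.2 1 2) p.1)).fun_sub
        (((hdX p.2 0 2) p.1).fun_mul ((hdX p.2 1 0) p.1))), hpdXeta]
  rw [hnest, hpdXxi, hpdYxi p, Matrix.det_fin_three]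
  ring
end

section
/- Let u₁, u₂ : ℝ → ℝ be smooth functions. Set H₁ = diag(1,−1,0), H₂ = diag(0,1,−1), e = E₁₂ + E₂₃, and 𝐮(x) = u₁′(x)·H₁ + u₂′(x)·H₂, where E_{ij} is the 3×3 elementary matrix with 1 in position (i,j). Then there exist a unique smooth function M : ℝ → Matrix (Fin 3) (Fin 3) ℝ with M(x) lower unitriangular for all x, and unique smooth functions I₁, I₂ : ℝ → ℝ, such that −M′(x) + M(x)·(e + 𝐮(x)) = (e + I₁(x)·E₂₁ + I₂(x)·E₃₁)·M(x) for all x. -/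
open Matrix

private lemma deriv_contDiff_top' {f : ℝ → ℝ} (hf : ContDiff ℝ (⊤ : ℕ∞) f) :
    ContDiff ℝ (⊤ : ℕ∞) (deriv f) := by
  have h : ((⊤ : ℕ∞) : WithTop ℕ∞) = ((⊤ : ℕ∞) : WithTop ℕ∞) + 1 := rfl
  rw [h] at hf
  exact (contDiff_succ_iff_deriv.mp hf).2.2

private noncomputable def DSb (u₁ u₂ : ℝ → ℝ) : ℝ → ℝ :=
  fun x => deriv (deriv u₂) x - deriv u₂ x * (deriv u₂ x - deriv u₁ x)

private noncomputable def DSI1 (u₁ u₂ : ℝ → ℝ) : ℝ → ℝ :=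
  fun x => deriv u₁ x * deriv u₁ x - deriv (deriv u₁) x - DSb u₁ u₂ x

private noncomputable def DSI2 (u₁ u₂ : ℝ → ℝ) : ℝ → ℝ :=
  fun x => DSb u₁ u₂ x * deriv u₁ x - deriv (DSb u₁ u₂) x

private noncomputable def DSM (u₁ u₂ : ℝ → ℝ) : ℝ → Matrix (Fin 3) (Fin 3) ℝ :=
  fun x => !![1, 0, 0; deriv u₁ x, 1, 0; DSb u₁ u₂ x, deriv u₂ x, 1]

private lemma DSb_contDiff {u₁ u₂ : ℝ → ℝ} (hu₁ : ContDiff ℝ (⊤ : ℕ∞) u₁) (hu₂ : ContDiff ℝ (⊤ : ℕ∞) u₂) :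
    ContDiff ℝ (⊤ : ℕ∞) (DSb u₁ u₂) := by
  exact (deriv_contDiff_top' (deriv_contDiff_top' hu₂)).sub
    ((deriv_contDiff_top' hu₂).mul
      ((deriv_contDiff_top' hu₂).sub (deriv_contDiff_top' hu₁)))

/-- Drinfeld–Sokolov gauge for the A₂ Toda field theory: given smooth `u₁, u₂`,
with `H₁ = diag(1,-1,0)`, `H₂ = diag(0,1,-1)`, `e = E₁₂ + E₂₃` and
`𝐮 = u₁′·H₁ + u₂′·H₂`, there exist a unique smooth lower unitriangular `M` and
unique smooth `I₁, I₂` such that `-M′ + M(e + 𝐮) = (e + I₁E₂₁ + I₂E₃₁)M`. -/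
theorem A2_drinfeld_sokolov_gauge
    (u₁ u₂ : ℝ → ℝ) (hu₁ : ContDiff ℝ (⊤ : ℕ∞) u₁) (hu₂ : ContDiff ℝ (⊤ : ℕ∞) u₂) :
    ∃! T : (ℝ → Matrix (Fin 3) (Fin 3) ℝ) × (ℝ → ℝ) × (ℝ → ℝ),
      (∀ i j : Fin 3, ContDiff ℝ (⊤ : ℕ∞) (fun x => T.1 x i j)) ∧
      (∀ x, ∀ i : Fin 3, T.1 x i i = 1) ∧
      (∀ x, ∀ i j : Fin 3, i < j → T.1 x i j = 0) ∧
      ContDiff ℝ (⊤ : ℕ∞) T.2.1 ∧ ContDiff ℝ (⊤ : ℕ∞) T.2.2 ∧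
      (∀ x : ℝ,
        -(Matrix.of fun i j : Fin 3 => deriv (fun s => T.1 s i j) x) +
            T.1 x *
              ((Matrix.single 0 1 1 + Matrix.single 1 2 1 :
                  Matrix (Fin 3) (Fin 3) ℝ) +
                deriv u₁ x • diagonal ![(1 : ℝ), -1, 0] +
                deriv u₂ x • diagonal ![(0 : ℝ), 1, -1]) =
          ((Matrix.single 0 1 1 + Matrix.single 1 2 1 :
              Matrix (Fin 3) (Fin 3) ℝ) +
            T.2.1 x • Matrix.single 1 0 1 +
            T.2.2 x • Matrix.single 2 0 1) * T.1 x) := by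
  have hb := DSb_contDiff hu₁ hu₂
  refine ⟨⟨DSM u₁ u₂, DSI1 u₁ u₂, DSI2 u₁ u₂⟩, ⟨?_, ?_, ?_, ?_, ?_, ?_⟩, ?_⟩
  · -- smoothness of entries
    intro i j
    fin_cases i <;> fin_cases j <;>
      simp only [DSM, Matrix.cons_val_zero, Matrix.cons_val_one, Matrix.head_cons,
        Matrix.cons_val', Matrix.empty_val', Matrix.cons_val_fin_one, Matrix.head_fin_const,
        Matrix.of_apply] <;>
      first
        | exact contDiff_const
        | exact deriv_contDiff_top' hu₁
        | exact deriv_contDiff_top' hu₂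
        | exact hb
  · -- diagonal ones
    intro x i
    fin_cases i <;> simp [DSM]
  · -- upper triangular zeros
    intro x i j hij
    fin_cases i <;> fin_cases j <;> simp_all [DSM]
  · -- I₁ smooth
    exact ((deriv_contDiff_top' hu₁).mul (deriv_contDiff_top' hu₁)).sub
      (deriv_contDiff_top' (deriv_contDiff_top' hu₁)) |>.sub hb
  · -- I₂ smooth
    exact (hb.mul (deriv_contDiff_top' hu₁)).sub (deriv_contDiff_top' hb)
  · -- the gauge equation
    intro x
    ext i j
    fin_cases i <;> fin_cases j <;>
      simp [DSM, DSI1, DSI2, Matrix.mul_apply, Fin.sum_univ_three, Matrix.single,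
        Matrix.add_apply, Matrix.neg_apply, Matrix.smul_apply, Matrix.diagonal,
        Matrix.of_apply, -Matrix.cons_mul] <;>
      (try rw [show (fun s => DSb u₁ u₂ s) = DSb u₁ u₂ from rfl]) <;>
      (try simp only [DSb]) <;> ring
  · -- uniqueness
    rintro ⟨N, J1, J2⟩ ⟨hsm, hdi, hup, hJ1, hJ2, heq⟩
    simp only at hsm hdi hup hJ1 hJ2 heq
    have h01 : ∀ x, N x 0 1 = 0 := fun x => hup x 0 1 (by decide)
    have h02 : ∀ x, N x 0 2 = 0 := fun x => hup x 0 2 (by decide)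
    have h12 : ∀ x, N x 1 2 = 0 := fun x => hup x 1 2 (by decide)
    have e00 : (fun s => N s 0 0) = fun _ => (1 : ℝ) := funext fun s => hdi s 0
    have e11 : (fun s => N s 1 1) = fun _ => (1 : ℝ) := funext fun s => hdi s 1
    -- entry (0,0) : N x 1 0 = u₁'
    have hp : ∀ x, N x 1 0 = deriv u₁ x := by
      intro x
      have h := congrFun (congrFun (heq x) 0) 0
      simp [Matrix.mul_apply, Fin.sum_univ_three, Matrix.single, Matrix.add_apply,
        Matrix.neg_apply, Matrix.smul_apply, Matrix.diagonal, Matrix.of_apply,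
        e00, hdi, h01, h02, h12, -Matrix.cons_mul] at h
      linarith
    have hpf : (fun s => N s 1 0) = deriv u₁ := funext hp
    -- entry (1,1) : N x 2 1 = u₂'
    have hr : ∀ x, N x 2 1 = deriv u₂ x := by
      intro x
      have h := congrFun (congrFun (heq x) 1) 1
      simp [Matrix.mul_apply, Fin.sum_univ_three, Matrix.single, Matrix.add_apply,
        Matrix.neg_apply, Matrix.smul_apply, Matrix.diagonal, Matrix.of_apply,
        e11, hdi, h01, h02, h12, hp, -Matrix.cons_mul] at h
      linarith
    have hrf : (fun s => N s 2 1) = deriv u₂ := funext hr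
    -- entry (2,1) : N x 2 0 = DSb
    have hq : ∀ x, N x 2 0 = DSb u₁ u₂ x := by
      intro x
      have h := congrFun (congrFun (heq x) 2) 1
      simp [Matrix.mul_apply, Fin.sum_univ_three, Matrix.single, Matrix.add_apply,
        Matrix.neg_apply, Matrix.smul_apply, Matrix.diagonal, Matrix.of_apply,
        hdi, h01, h02, h12, hr, hrf, -Matrix.cons_mul] at h
      simp [DSb]
      linarith
    have hqf : (fun s => N s 2 0) = DSb u₁ u₂ := funext hq
    -- entry (1,0) : J1 = DSI1
    have hJ1e : ∀ x, J1 x = DSI1 u₁ u₂ x := by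
      intro x
      have h := congrFun (congrFun (heq x) 1) 0
      simp [Matrix.mul_apply, Fin.sum_univ_three, Matrix.single, Matrix.add_apply,
        Matrix.neg_apply, Matrix.smul_apply, Matrix.diagonal, Matrix.of_apply,
        hdi, h01, h02, h12, hp, hq, hpf, -Matrix.cons_mul] at h
      simp [DSI1]
      linarith
    -- entry (2,0) : J2 = DSI2
    have hJ2e : ∀ x, J2 x = DSI2 u₁ u₂ x := by
      intro x
      have h := congrFun (congrFun (heq x) 2) 0
      simp [Matrix.mul_apply, Fin.sum_univ_three, Matrix.single, Matrix.add_apply,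
        Matrix.neg_apply, Matrix.smul_apply, Matrix.diagonal, Matrix.of_apply,
        hdi, h01, h02, h12, hq, hqf, -Matrix.cons_mul] at h
      simp [DSI2]
      linarith
    have hN : N = DSM u₁ u₂ := by
      funext x
      ext i j
      fin_cases i <;> fin_cases j <;>
        simp [DSM, hdi x, h01 x, h02 x, h12 x, hp x, hq x, hr x]
    exact Prod.ext hN (Prod.ext (funext hJ1e) (funext hJ2e))
end
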